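/- arXiv:2509.15119 — 5 statements merged into one kernel-verified Lean document; each statement's English description precedes it below -/
import Mathlib

section
/- Let K be a field and let I be a non-zero monomial ideal in the polynomial ring S = K[x_1, x_2]. Then reg(Ī) ≤ reg(I), where Ī is the integral closure of I and reg denotes Castelnuovo–Mumford regularity. -/
open MvPolynomial



/-- The `p`-th term of the Koszul complex of the module `I` with respect to the
variables `x_1, …, x_n`:  `I ⊗ Λ^p (Sⁿ)`, realized as functions from the
`p`-element subsets of `Fin n` to `I`. -/
abbrev KoszulTerm {K : Type*} [Field K] {n : ℕ} (I : Ideal (MvPolynomial (Fin n) K))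
    (p : ℕ) : Type _ :=
  {s : Finset (Fin n) // s.card = p} → I

/-- The Koszul differential `I ⊗ Λ^{p+1}(Sⁿ) → I ⊗ Λ^p(Sⁿ)`,
`m ⊗ e_S ↦ Σ_{j ∈ S} (-1)^{|{i ∈ S : i < j}|} x_j m ⊗ e_{S \ {j}}`. -/
noncomputable def koszulD {K : Type*} [Field K] {n : ℕ} {I : Ideal (MvPolynomial (Fin n) K)}
    {p : ℕ} (f : KoszulTerm I (p + 1)) : KoszulTerm I p := fun s =>
  ∑ j : Fin n,
    if h : j ∈ s.val then 0
    else ((-1 : ℤ) ^ (s.val.filter (fun i => i < j)).card) •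
      ((MvPolynomial.X j : MvPolynomial (Fin n) K) •
        f ⟨insert j s.val, by rw [Finset.card_insert_of_notMem h, s.property]⟩)

/-- A cycle of the Koszul complex. -/
def IsKoszulCycle {K : Type*} [Field K] {n : ℕ} {I : Ideal (MvPolynomial (Fin n) K)}
    {p : ℕ} (f : KoszulTerm I p) : Prop :=
  match p, f with
  | 0, _ => True
  | _ + 1, f => koszulD f = 0

/-- A boundary of the Koszul complex. -/
def IsKoszulBoundary {K : Type*} [Field K] {n : ℕ} {I : Ideal (MvPolynomial (Fin n) K)}
    {p : ℕ} (f : KoszulTerm I p) : Prop :=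
  ∃ g : KoszulTerm I (p + 1), koszulD g = f

/-- `BettiNonzero I p q` says that the graded Betti number `β_{p,q}(I)` is nonzero:
by the standard identification `Tor_p(I, K)_q = H_p(I ⊗ Koszul(x_1,…,x_n))_q`
(where `e_S` has internal degree `|S|`), this happens iff there is a homogeneous
cycle of internal degree `q` (i.e. with polynomial coefficients homogeneous of degree
`q - p`) that is not a boundary. -/
def BettiNonzero {K : Type*} [Field K] {n : ℕ} (I : Ideal (MvPolynomial (Fin n) K))
    (p q : ℕ) : Prop :=
  ∃ f : KoszulTerm I p, IsKoszulCycle f ∧ ¬ IsKoszulBoundary f ∧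
    ∀ s, MvPolynomial.IsHomogeneous ((f s : MvPolynomial (Fin n) K)) (q - p)

/-- The Castelnuovo–Mumford regularity of an ideal `I` of `K[x_1,…,x_n]`:
`reg I = max { q - p : β_{p,q}(I) ≠ 0 }`. -/
noncomputable def reg {K : Type*} [Field K] {n : ℕ}
    (I : Ideal (MvPolynomial (Fin n) K)) : ℕ :=
  sSup { r : ℕ | ∃ p q : ℕ, BettiNonzero I p q ∧ q - p = r }

/-- The integral closure of a monomial ideal: the ideal generated by all monomials `u`
such that `u^k ∈ I^k` for some `k ≥ 1`. -/
noncomputable def intCl {K : Type*} [Field K] {n : ℕ} (I : Ideal (MvPolynomial (Fin n) K)) :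
    Ideal (MvPolynomial (Fin n) K) :=
  Ideal.span { u | (∃ a : Fin n →₀ ℕ, u = monomial a (1 : K)) ∧ ∃ k : ℕ, 1 ≤ k ∧ u ^ k ∈ I ^ k }

/-- `I` is a monomial ideal: it is generated by monomials. -/
def IsMonomialIdeal {K : Type*} [Field K] {n : ℕ}
    (I : Ideal (MvPolynomial (Fin n) K)) : Prop :=
  ∃ A : Set (Fin n →₀ ℕ), I = Ideal.span ((fun a => (monomial a (1 : K))) '' A)

/-- `x^e` is a minimal monomial generator of the monomial ideal `I`:
`x^e ∈ I` and no proper (monomial) divisor of `x^e` lies in `I`. -/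
def IsMinMonGen {K : Type*} [Field K] {n : ℕ} (I : Ideal (MvPolynomial (Fin n) K))
    (e : Fin n →₀ ℕ) : Prop :=
  (monomial e (1 : K)) ∈ I ∧
    ∀ i : Fin n, e i ≠ 0 → (monomial (e - Finsupp.single i 1) (1 : K)) ∉ I

/-- A set `G` (thought of as the minimal monomial generating set of a monomial ideal)
admits linear quotients: there is an ordering `u_1, …, u_M` of `G` such that each colon
ideal `(u_1, …, u_{k-1}) : u_k` is generated by a subset of the variables. -/
def HasLinQuot {K : Type*} [Field K] {n : ℕ}
    (G : Set (MvPolynomial (Fin n) K)) : Prop :=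
  ∃ (M : ℕ) (w : Fin M → MvPolynomial (Fin n) K),
    Function.Injective w ∧ Set.range w = G ∧
      ∀ k : Fin M, 0 < (k : ℕ) →
        ∃ V : Set (Fin n),
          (Ideal.span (w '' {j : Fin M | j < k})).colon (Ideal.span {w k}) =
            Ideal.span ((fun i => (X i : MvPolynomial (Fin n) K)) '' V)



namespace RegAux


abbrev Exps := Fin 2 →₀ ℕ

noncomputable def mk (x y : ℕ) : Exps := Finsupp.single 0 x + Finsupp.single 1 y

@[simp] lemma mk_apply0 (x y : ℕ) : mk x y 0 = x := by
  simp [mk, Finsupp.single_apply]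

@[simp] lemma mk_apply1 (x y : ℕ) : mk x y 1 = y := by
  simp [mk, Finsupp.single_apply]

lemma fin2_cases (i : Fin 2) : i = 0 ∨ i = 1 := by omega

lemma mk_eta (a : Exps) : mk (a 0) (a 1) = a := by
  ext i
  rcases fin2_cases i with h | h <;> subst h <;> simp

lemma exps_le_iff (a b : Exps) : a ≤ b ↔ a 0 ≤ b 0 ∧ a 1 ≤ b 1 := by
  constructor
  · intro h; exact ⟨h 0, h 1⟩
  · intro h i; rcases fin2_cases i with hi | hi <;> subst hi <;> [exact h.1; exact h.2]

def deg (a : Exps) : ℕ := a 0 + a 1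

lemma degree_eq_deg (a : Exps) : a.degree = deg a := by
  rw [Finsupp.degree, deg]
  rw [show (a 0 + a 1) = ∑ i : Fin 2, a i from (Fin.sum_univ_two a).symm]
  exact Finset.sum_subset (Finset.subset_univ _) (by
    intro x _ hx
    simpa using (Finsupp.notMem_support_iff.mp hx))

@[simp] lemma deg_add (a b : Exps) : deg (a + b) = deg a + deg b := by
  simp [deg]; omega

@[simp] lemma deg_single0 : deg (Finsupp.single (0 : Fin 2) 1) = 1 := by
  simp [deg, Finsupp.single_apply]

@[simp] lemma deg_single1 : deg (Finsupp.single (1 : Fin 2) 1) = 1 := by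
  simp [deg, Finsupp.single_apply]



variable {K : Type*} [Field K]

/-- upward closed set of exponents -/
def UpSet (F : Set Exps) : Prop := ∀ ⦃a b : Exps⦄, a ∈ F → a ≤ b → b ∈ F

noncomputable def MIdeal (K : Type*) [Field K] (F : Set Exps) : Ideal (MvPolynomial (Fin 2) K) :=
  Ideal.span ((fun s => monomial s (1 : K)) '' F)

lemma mem_MIdeal_iff {F : Set Exps} (hF : UpSet F) {p : MvPolynomial (Fin 2) K} :
    p ∈ MIdeal K F ↔ ∀ m ∈ p.support, m ∈ F := by
  rw [MIdeal, mem_ideal_span_monomial_image]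
  constructor
  · intro h m hm
    obtain ⟨s, hs, hle⟩ := h m hm
    exact hF hs hle
  · intro h m hm
    exact ⟨m, h m hm, le_rfl⟩

lemma monomial_mem_MIdeal_iff {F : Set Exps} (hF : UpSet F) {a : Exps} :
    monomial a (1 : K) ∈ MIdeal K F ↔ a ∈ F := by
  rw [mem_MIdeal_iff hF]
  constructor
  · intro h
    exact h a (by simp [support_monomial])
  · intro h m hm
    classical
    rw [support_monomial, if_neg one_ne_zero, Finset.mem_singleton] at hm
    subst hm; exact h

variable (I : Ideal (MvPolynomial (Fin 2) K))

def Eset : Set Exps := {a | monomial a (1 : K) ∈ I}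

lemma monomial_sub_mul {a b : Exps} (h : a ≤ b) :
    (monomial (b - a) (1 : K)) * monomial a 1 = monomial b 1 := by
  rw [monomial_mul, one_mul, tsub_add_cancel_of_le h]

lemma Eset_up : UpSet (Eset I) := by
  intro a b ha hab
  have := Ideal.mul_mem_left I (monomial (b - a) (1 : K)) ha
  rwa [monomial_sub_mul hab] at this

lemma Eset_eq (hmono : ∃ A : Set Exps,
    I = Ideal.span ((fun a => (monomial a (1 : K))) '' A)) :
    I = MIdeal K (Eset I) := by
  obtain ⟨A, hA⟩ := hmono
  apply le_antisymm
  · conv_lhs => rw [hA]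
    apply Ideal.span_mono
    rintro - ⟨a, ha, rfl⟩
    refine ⟨a, ?_, rfl⟩
    show monomial a (1:K) ∈ I
    rw [hA]
    exact Ideal.subset_span ⟨a, ha, rfl⟩
  · rw [MIdeal, Ideal.span_le]
    rintro - ⟨a, ha, rfl⟩
    exact ha

lemma mem_I_iff (hmono : ∃ A : Set Exps,
    I = Ideal.span ((fun a => (monomial a (1 : K))) '' A)) {p : MvPolynomial (Fin 2) K} :
    p ∈ I ↔ ∀ m ∈ p.support, m ∈ Eset I := by
  conv_lhs => rw [Eset_eq I hmono]
  exact mem_MIdeal_iff (Eset_up I)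


def Ebar : Set Exps := {a | ∃ k : ℕ, 1 ≤ k ∧ (monomial a (1 : K)) ^ k ∈ I ^ k}

lemma monomial_pow_one (a : Exps) (k : ℕ) :
    (monomial a (1 : K)) ^ k = monomial (k • a) 1 := by
  rw [monomial_pow, one_pow]

lemma Ebar_up : UpSet (Ebar I) := by
  rintro a b ⟨k, hk, hak⟩ hab
  refine ⟨k, hk, ?_⟩
  have : (monomial b (1:K)) ^ k = (monomial (k • (b - a)) (1:K)) * (monomial a 1) ^ k := by
    rw [monomial_pow_one, monomial_pow_one, monomial_mul, one_mul, ← smul_add,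
      tsub_add_cancel_of_le hab]
  rw [this]
  exact Ideal.mul_mem_left _ _ hak

lemma Eset_subset_Ebar : Eset I ⊆ Ebar I := by
  intro a ha
  exact ⟨1, le_rfl, by rw [pow_one, pow_one]; exact ha⟩

lemma intCl_gen_eq :
    {u : MvPolynomial (Fin 2) K |
        (∃ a : Fin 2 →₀ ℕ, u = monomial a (1 : K)) ∧ ∃ k : ℕ, 1 ≤ k ∧ u ^ k ∈ I ^ k} =
      (fun s => monomial s (1 : K)) '' Ebar I := by
  ext u
  constructor
  · rintro ⟨⟨a, rfl⟩, k, hk, h⟩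
    exact ⟨a, ⟨k, hk, h⟩, rfl⟩
  · rintro ⟨a, ⟨k, hk, h⟩, rfl⟩
    exact ⟨⟨a, rfl⟩, k, hk, h⟩

/-! ### Coordinate lower bounds for the integral closure -/

noncomputable def coordIdeal (K : Type*) [Field K] (i : Fin 2) (c : ℕ) :
    Ideal (MvPolynomial (Fin 2) K) :=
  Ideal.span ((fun s => monomial s (1 : K)) '' {a : Exps | c ≤ a i})

lemma coordIdeal_zero (i : Fin 2) : coordIdeal K i 0 = ⊤ := by
  rw [Ideal.eq_top_iff_one, coordIdeal]
  exact Ideal.subset_span ⟨0, by simp, by simp⟩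

lemma coordIdeal_mul (i : Fin 2) (c d : ℕ) :
    coordIdeal K i c * coordIdeal K i d ≤ coordIdeal K i (c + d) := by
  rw [coordIdeal, coordIdeal, Ideal.span_mul_span']
  rw [Ideal.span_le]
  rintro - ⟨-, ⟨a, ha, rfl⟩, -, ⟨b, hb, rfl⟩, rfl⟩
  refine Ideal.subset_span ⟨a + b, ?_, ?_⟩
  · simp only [Set.mem_setOf_eq, Finsupp.add_apply]
    exact add_le_add ha hb
  · simp [monomial_mul]

lemma I_le_coordIdeal (hmono : ∃ A : Set Exps,
    I = Ideal.span ((fun a => (monomial a (1 : K))) '' A)) (i : Fin 2) (c : ℕ)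
    (hc : ∀ a ∈ Eset I, c ≤ a i) : I ≤ coordIdeal K i c := by
  conv_lhs => rw [Eset_eq I hmono]
  apply Ideal.span_mono
  rintro - ⟨a, ha, rfl⟩
  exact ⟨a, hc a ha, rfl⟩

lemma pow_le_coordIdeal (hmono : ∃ A : Set Exps,
    I = Ideal.span ((fun a => (monomial a (1 : K))) '' A)) (i : Fin 2) (c : ℕ)
    (hc : ∀ a ∈ Eset I, c ≤ a i) (k : ℕ) : I ^ k ≤ coordIdeal K i (k * c) := by
  induction k with
  | zero => simp [coordIdeal_zero]
  | succ k ih =>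
      have : I ^ (k + 1) = I * I ^ k := by ring
      rw [this]
      calc I * I ^ k ≤ coordIdeal K i c * coordIdeal K i (k * c) :=
            Ideal.mul_mono (I_le_coordIdeal I hmono i c hc) ih
        _ ≤ coordIdeal K i (c + k * c) := coordIdeal_mul i c (k * c)
        _ = coordIdeal K i ((k + 1) * c) := by ring_nf

lemma Ebar_coord_bound (hmono : ∃ A : Set Exps,
    I = Ideal.span ((fun a => (monomial a (1 : K))) '' A)) (i : Fin 2) (c : ℕ)
    (hc : ∀ a ∈ Eset I, c ≤ a i) {a : Exps} (ha : a ∈ Ebar I) : c ≤ a i := by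
  obtain ⟨k, hk, hak⟩ := ha
  have h2 : (monomial a (1:K)) ^ k ∈ coordIdeal K i (k * c) :=
    pow_le_coordIdeal I hmono i c hc k hak
  rw [monomial_pow_one, coordIdeal, mem_ideal_span_monomial_image] at h2
  obtain ⟨s, hs, hle⟩ := h2 (k • a) (by
    classical
    simp [support_monomial])
  have : k * c ≤ k * a i := le_trans hs (by simpa using hle i)
  exact Nat.le_of_mul_le_mul_left this (by omega)


/-! ### Koszul computations -/

section Koszul

variable {J : Ideal (MvPolynomial (Fin 2) K)}

lemma term0_eq (s : {s : Finset (Fin 2) // s.card = 0}) : s = ⟨∅, rfl⟩ :=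
  Subtype.ext (Finset.card_eq_zero.mp s.2)

lemma term1_eq (s : {s : Finset (Fin 2) // s.card = 1}) :
    s = ⟨{0}, by decide⟩ ∨ s = ⟨{1}, by decide⟩ := by
  obtain ⟨j, hj⟩ := Finset.card_eq_one.mp s.2
  rcases fin2_cases j with h | h <;> subst h
  · exact Or.inl (Subtype.ext hj)
  · exact Or.inr (Subtype.ext hj)

lemma term2_eq (s : {s : Finset (Fin 2) // s.card = 2}) : s = ⟨{0, 1}, by decide⟩ := by
  refine Subtype.ext ?_
  have h1 : s.1 = Finset.univ := Finset.eq_univ_of_card s.1 (by rw [s.2]; rfl)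
  rw [h1]; decide

lemma koszulD_zero {p : ℕ} : koszulD (0 : KoszulTerm J (p + 1)) = 0 := by
  funext s
  simp [koszulD]

lemma koszulD_apply0 (f : KoszulTerm J 1) :
    ((koszulD f ⟨∅, rfl⟩ : J) : MvPolynomial (Fin 2) K) =
      X 0 * ((f ⟨{0}, by decide⟩ : J) : MvPolynomial (Fin 2) K)
        + X 1 * ((f ⟨{1}, by decide⟩ : J) : MvPolynomial (Fin 2) K) := by
  rw [koszulD, Fin.sum_univ_two]
  rw [dif_neg (Finset.notMem_empty 0), dif_neg (Finset.notMem_empty 1)]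
  simp only [Finset.filter_empty, Finset.card_empty, pow_zero, one_smul]
  push_cast
  rw [smul_eq_mul, smul_eq_mul]
  congr 2

lemma koszulD_apply10 (f : KoszulTerm J 2) :
    ((koszulD f ⟨{0}, by decide⟩ : J) : MvPolynomial (Fin 2) K) =
      -(X 1 * ((f ⟨{0, 1}, by decide⟩ : J) : MvPolynomial (Fin 2) K)) := by
  rw [koszulD, Fin.sum_univ_two]
  rw [dif_pos (by decide : (0 : Fin 2) ∈ ({0} : Finset (Fin 2))),
    dif_neg (by decide : ¬ (1 : Fin 2) ∈ ({0} : Finset (Fin 2)))]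
  have hfilt : Finset.filter (fun i => i < (1 : Fin 2)) ({0} : Finset (Fin 2)) = {0} := by decide
  rw [hfilt]
  simp only [Finset.card_singleton, pow_one, neg_one_smul, zero_add]
  push_cast
  rw [smul_eq_mul]
  rw [term2_eq (⟨insert 1 {0}, by decide⟩ : {s : Finset (Fin 2) // s.card = 2})]

lemma koszulD_apply11 (f : KoszulTerm J 2) :
    ((koszulD f ⟨{1}, by decide⟩ : J) : MvPolynomial (Fin 2) K) =
      X 0 * ((f ⟨{0, 1}, by decide⟩ : J) : MvPolynomial (Fin 2) K) := by
  rw [koszulD, Fin.sum_univ_two]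
  rw [dif_neg (by decide : ¬ (0 : Fin 2) ∈ ({1} : Finset (Fin 2))),
    dif_pos (by decide : (1 : Fin 2) ∈ ({1} : Finset (Fin 2)))]
  have hfilt : Finset.filter (fun i => i < (0 : Fin 2)) ({1} : Finset (Fin 2)) = ∅ := by decide
  rw [hfilt]
  simp only [Finset.card_empty, pow_zero, one_smul, add_zero]
  push_cast
  rw [smul_eq_mul]

end Koszul


/-! ### Betti numbers in homological degree 0 -/

section Betti

variable {J : Ideal (MvPolynomial (Fin 2) K)} {F : Set Exps}

def MinGen (F : Set Exps) (e : Exps) : Prop :=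
  e ∈ F ∧ ∀ i : Fin 2, e i ≠ 0 → e - Finsupp.single i 1 ∉ F

def Corner (F : Set Exps) (c : Exps) : Prop :=
  c ∉ F ∧ c + Finsupp.single 0 1 ∈ F ∧ c + Finsupp.single 1 1 ∈ F

lemma boundary0_iff {f : KoszulTerm J 0} :
    IsKoszulBoundary f ↔ ∃ g0 g1 : MvPolynomial (Fin 2) K, g0 ∈ J ∧ g1 ∈ J ∧
      ((f ⟨∅, rfl⟩ : J) : MvPolynomial (Fin 2) K) = X 0 * g0 + X 1 * g1 := by
  classical
  constructor
  · rintro ⟨g, hg⟩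
    refine ⟨g ⟨{0}, by decide⟩, g ⟨{1}, by decide⟩, (g _).2, (g _).2, ?_⟩
    rw [← koszulD_apply0 g, hg]
  · rintro ⟨g0, g1, h0, h1, heq⟩
    refine ⟨fun s => if (0 : Fin 2) ∈ s.1 then ⟨g0, h0⟩ else ⟨g1, h1⟩, ?_⟩
    funext s
    rw [term0_eq s]
    apply Subtype.ext
    have e0 : (if (0:Fin 2) ∈ ({0}:Finset (Fin 2)) then (⟨g0,h0⟩ : ↥J) else (⟨g1,h1⟩ : ↥J)) = ⟨g0,h0⟩ :=
      if_pos (by decide)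
    have e1 : (if (0:Fin 2) ∈ ({1}:Finset (Fin 2)) then (⟨g0,h0⟩ : ↥J) else (⟨g1,h1⟩ : ↥J)) = ⟨g1,h1⟩ :=
      if_neg (by decide)
    rw [koszulD_apply0]
    show X 0 * ((if (0:Fin 2) ∈ ({0}:Finset (Fin 2)) then (⟨g0,h0⟩ : ↥J) else (⟨g1,h1⟩ : ↥J)) : MvPolynomial (Fin 2) K)
        + X 1 * ((if (0:Fin 2) ∈ ({1}:Finset (Fin 2)) then (⟨g0,h0⟩ : ↥J) else (⟨g1,h1⟩ : ↥J)) : MvPolynomial (Fin 2) K) = _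
    rw [if_pos (show (0:Fin 2) ∈ ({0}:Finset (Fin 2)) by decide),
      if_neg (show ¬ (0:Fin 2) ∈ ({1}:Finset (Fin 2)) by decide), heq]

lemma mem_of_support_subset (hmem : ∀ p : MvPolynomial (Fin 2) K,
    p ∈ J ↔ ∀ m ∈ p.support, m ∈ F) {a : Exps} (c : K) (ha : a ∈ F) :
    monomial a c ∈ J := by
  rw [hmem]
  intro m hm
  have := support_monomial_subset hm
  rw [Finset.mem_singleton] at this
  subst this; exact ha

lemma decompose (hmem : ∀ p : MvPolynomial (Fin 2) K,
    p ∈ J ↔ ∀ m ∈ p.support, m ∈ F) (P : MvPolynomial (Fin 2) K)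
    (h : ∀ m ∈ P.support, ∃ i : Fin 2, m i ≠ 0 ∧ m - Finsupp.single i 1 ∈ F) :
    ∃ g0 g1, g0 ∈ J ∧ g1 ∈ J ∧ P = X 0 * g0 + X 1 * g1 := by
  classical
  have key : ∀ (s : Finset Exps),
      (∀ m ∈ s, ∃ i : Fin 2, m i ≠ 0 ∧ m - Finsupp.single i 1 ∈ F) → ∀ c : Exps → K,
      ∃ g0 g1, g0 ∈ J ∧ g1 ∈ J ∧
        (∑ m ∈ s, monomial m (c m)) = X 0 * g0 + X 1 * g1 := by
    intro s
    induction s using Finset.induction_on with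
    | empty => exact fun _ c => ⟨0, 0, zero_mem _, zero_mem _, by simp⟩
    | insert m s hms ih =>
        intro hs c
        obtain ⟨g0, g1, h0, h1, heq⟩ := ih (fun m' hm' => hs m' (Finset.mem_insert_of_mem hm')) c
        obtain ⟨i, hi, hiF⟩ := hs m (Finset.mem_insert_self _ _)
        have hle : Finsupp.single i 1 ≤ m := Finsupp.single_le_iff.mpr (by omega)
        have hXmul : X i * monomial (m - Finsupp.single i 1) (c m) = monomial m (c m) := by
          rw [X, monomial_mul, one_mul, add_tsub_cancel_of_le hle]
        have hmemJ : monomial (m - Finsupp.single i 1) (c m) ∈ J :=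
          mem_of_support_subset hmem _ hiF
        rw [Finset.sum_insert hms, heq]
        rcases fin2_cases i with hi0 | hi0 <;> subst hi0
        · exact ⟨monomial (m - Finsupp.single 0 1) (c m) + g0, g1,
            add_mem hmemJ h0, h1, by rw [mul_add, hXmul]; ring⟩
        · exact ⟨g0, monomial (m - Finsupp.single 1 1) (c m) + g1,
            h0, add_mem hmemJ h1, by rw [mul_add, hXmul]; ring⟩
  obtain ⟨g0, g1, h0, h1, heq⟩ := key P.support h (fun m => coeff m P)
  exact ⟨g0, g1, h0, h1, by rw [← heq, support_sum_monomial_coeff]⟩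

lemma betti0_to (hmem : ∀ p : MvPolynomial (Fin 2) K,
    p ∈ J ↔ ∀ m ∈ p.support, m ∈ F) {q : ℕ} (h : BettiNonzero J 0 q) :
    ∃ e, MinGen F e ∧ deg e = q := by
  obtain ⟨f, _, hnb, hhom⟩ := h
  set P := ((f ⟨∅, rfl⟩ : J) : MvPolynomial (Fin 2) K) with hP
  by_contra hno
  push_neg at hno
  apply hnb
  rw [boundary0_iff]
  refine decompose hmem P ?_
  intro m hm
  have hmF : m ∈ F := (hmem P).mp (f _).2 m hm
  have hdeg : deg m = q := by
    by_contra hd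
    have h0 : coeff m P = 0 := by
      refine (hhom ⟨∅, rfl⟩).coeff_eq_zero ?_
      rw [degree_eq_deg, Nat.sub_zero]
      exact hd
    exact (mem_support_iff.mp hm) h0
  by_contra hnone
  push_neg at hnone
  exact hno m ⟨hmF, fun i hi => hnone i hi⟩ hdeg

lemma betti0_from (hmem : ∀ p : MvPolynomial (Fin 2) K,
    p ∈ J ↔ ∀ m ∈ p.support, m ∈ F) {e : Exps} (he : MinGen F e) :
    BettiNonzero J 0 (deg e) := by
  classical
  refine ⟨fun _ => ⟨monomial e 1, mem_of_support_subset hmem _ he.1⟩, trivial, ?_, ?_⟩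
  · rw [boundary0_iff]
    rintro ⟨g0, g1, h0, h1, heq⟩
    have heq' : (monomial e 1 : MvPolynomial (Fin 2) K) = X 0 * g0 + X 1 * g1 := heq
    have hc : coeff e (monomial e (1 : K)) = 1 := by simp [coeff_monomial]
    rw [heq'] at hc
    have hz : ∀ i : Fin 2, (g : MvPolynomial (Fin 2) K) → g ∈ J → coeff e (X i * g) = 0 := by
      intro i g hg
      rw [coeff_X_mul']
      split
      · rename_i hmem'
        have hne : e i ≠ 0 := by
          simpa [Finsupp.mem_support_iff] using hmem'
        by_contra hcon
        have : e - Finsupp.single i 1 ∈ F := (hmem g).mp hg _ (mem_support_iff.mpr hcon)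
        exact he.2 i hne this
      · rfl
    rw [coeff_add, hz 0 g0 h0, hz 1 g1 h1] at hc
    simpa using hc
  · intro s
    refine isHomogeneous_monomial _ ?_
    rw [degree_eq_deg, Nat.sub_zero]

end Betti


/-! ### Betti numbers in homological degree 1 -/

section Betti1

variable {J : Ideal (MvPolynomial (Fin 2) K)} {F : Set Exps}

lemma cycle1 {f : KoszulTerm J 1} (hf : IsKoszulCycle f) :
    X 0 * ((f ⟨{0}, by decide⟩ : J) : MvPolynomial (Fin 2) K)
      + X 1 * ((f ⟨{1}, by decide⟩ : J) : MvPolynomial (Fin 2) K) = 0 := by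
  have h : koszulD f = 0 := hf
  have h2 := congrFun h ⟨∅, rfl⟩
  rw [← koszulD_apply0 f]
  rw [h2]
  rfl

lemma boundary1_iff {f : KoszulTerm J 1} :
    IsKoszulBoundary f ↔ ∃ G : MvPolynomial (Fin 2) K, G ∈ J ∧
      ((f ⟨{0}, by decide⟩ : J) : MvPolynomial (Fin 2) K) = -(X 1 * G) ∧
      ((f ⟨{1}, by decide⟩ : J) : MvPolynomial (Fin 2) K) = X 0 * G := by
  constructor
  · rintro ⟨g, hg⟩
    refine ⟨((g ⟨{0, 1}, by decide⟩ : J) : MvPolynomial (Fin 2) K), (g _).2, ?_, ?_⟩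
    · rw [← congrFun hg ⟨{0}, by decide⟩, koszulD_apply10]
    · rw [← congrFun hg ⟨{1}, by decide⟩, koszulD_apply11]
  · rintro ⟨G, hG, h0, h1⟩
    refine ⟨fun _ => ⟨G, hG⟩, ?_⟩
    funext s
    rcases term1_eq s with hs | hs <;> subst hs <;> apply Subtype.ext
    · rw [koszulD_apply10, ← h0]
    · rw [koszulD_apply11, ← h1]

lemma betti1_to (hmem : ∀ p : MvPolynomial (Fin 2) K,
    p ∈ J ↔ ∀ m ∈ p.support, m ∈ F) {q : ℕ} (h : BettiNonzero J 1 q) :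
    q ≤ 1 ∨ ∃ c, Corner F c ∧ deg c = q - 2 := by
  classical
  obtain ⟨f, hcyc, hnb, hhom⟩ := h
  set P0 := ((f ⟨{0}, by decide⟩ : J) : MvPolynomial (Fin 2) K) with hP0def
  set P1 := ((f ⟨{1}, by decide⟩ : J) : MvPolynomial (Fin 2) K) with hP1def
  have hc : X 0 * P0 + X 1 * P1 = 0 := cycle1 hcyc
  have vanish : ∀ m : Exps, m 1 = 0 → coeff m P0 = 0 := by
    intro m hm
    have h2 := congrArg (coeff (m + Finsupp.single 0 1)) hc
    rw [coeff_add, coeff_zero] at h2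
    rw [add_comm m (Finsupp.single 0 1), coeff_X_mul] at h2
    rw [coeff_X_mul'] at h2
    rw [if_neg (by
      simp only [Finsupp.mem_support_iff, Finsupp.add_apply, Finsupp.single_apply]
      simp [hm])] at h2
    simpa using h2
  set h := P0.divMonomial (Finsupp.single 1 1) with hdef
  have hX1h : X 1 * h = P0 := by
    ext m
    rw [coeff_X_mul']
    split
    · rename_i hm1
      rw [hdef, coeff_divMonomial]
      congr 1
      rw [add_comm]
      refine tsub_add_cancel_of_le (Finsupp.single_le_iff.mpr ?_)
      have := by simpa [Finsupp.mem_support_iff] using hm1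
      omega
    · rename_i hm1
      rw [vanish m (by simpa [Finsupp.mem_support_iff] using hm1)]
  have hP1 : P1 = -(X 0 * h) := by
    have : X 1 * (X 0 * h + P1) = 0 := by
      rw [mul_add, ← mul_assoc, mul_comm (X 1) (X 0), mul_assoc, hX1h]
      exact hc
    have h2 : X 0 * h + P1 = 0 :=
      (mul_eq_zero.mp this).resolve_left (X_ne_zero 1)
    linear_combination h2
  have hnotJ : h ∉ J := by
    intro hhJ
    apply hnb
    rw [boundary1_iff]
    refine ⟨-h, neg_mem hhJ, ?_, ?_⟩
    · rw [mul_neg, neg_neg, hX1h]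
    · rw [mul_neg]
      exact hP1
  obtain ⟨m, hm, hmF⟩ : ∃ m ∈ h.support, m ∉ F := by
    by_contra hcon
    push_neg at hcon
    exact hnotJ ((hmem h).mpr hcon)
  have hcm : coeff m h ≠ 0 := mem_support_iff.mp hm
  have hm1 : m + Finsupp.single 1 1 ∈ P0.support := by
    rw [mem_support_iff, ← hX1h, add_comm m, coeff_X_mul]
    exact hcm
  have hcor : Corner F m := by
    refine ⟨hmF, ?_, ?_⟩
    · have : coeff (m + Finsupp.single 0 1) P1 ≠ 0 := by
        rw [hP1, coeff_neg, add_comm m, coeff_X_mul]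
        simpa using hcm
      exact (hmem P1).mp (f _).2 _ (mem_support_iff.mpr this)
    · exact (hmem P0).mp (f _).2 _ hm1
  rcases le_or_gt q 1 with hq | hq
  · exact Or.inl hq
  · refine Or.inr ⟨m, hcor, ?_⟩
    have hdeg : (m + Finsupp.single 1 1).degree = q - 1 := by
      by_contra hd
      exact mem_support_iff.mp hm1 ((hhom ⟨{0}, by decide⟩).coeff_eq_zero hd)
    rw [degree_eq_deg, deg_add, deg_single1] at hdeg
    omega

lemma betti1_from (hmem : ∀ p : MvPolynomial (Fin 2) K,
    p ∈ J ↔ ∀ m ∈ p.support, m ∈ F) {c : Exps} (hc : Corner F c) :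
    BettiNonzero J 1 (deg c + 2) := by
  classical
  refine ⟨fun s => if (0 : Fin 2) ∈ s.1
      then ⟨monomial (c + Finsupp.single 1 1) 1, mem_of_support_subset hmem _ hc.2.2⟩
      else ⟨-(monomial (c + Finsupp.single 0 1) 1),
        neg_mem (mem_of_support_subset hmem _ hc.2.1)⟩, ?_, ?_, ?_⟩
  · show koszulD _ = 0
    funext s
    rw [term0_eq s]
    apply Subtype.ext
    rw [koszulD_apply0]
    show X 0 * ((monomial (c + Finsupp.single 1 1) (1:K))) +
        X 1 * (-(monomial (c + Finsupp.single 0 1) (1:K))) = ((0 : J) : MvPolynomial (Fin 2) K)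
    rw [mul_neg, X, X, monomial_mul, monomial_mul, one_mul]
    rw [show Finsupp.single (0 : Fin 2) 1 + (c + Finsupp.single 1 1)
        = Finsupp.single (1 : Fin 2) 1 + (c + Finsupp.single 0 1) by abel]
    simp
  · rw [boundary1_iff]
    rintro ⟨G, hG, h0, h1⟩
    have h0' : (monomial (c + Finsupp.single 1 1) (1:K)) = -(X 1 * G) := h0
    have hcoeff := congrArg (coeff (c + Finsupp.single 1 1)) h0'
    rw [coeff_monomial, if_pos rfl, coeff_neg, add_comm c, coeff_X_mul] at hcoeff
    have : coeff c G ≠ 0 := by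
      intro hz
      rw [hz] at hcoeff
      simpa using hcoeff
    exact hc.1 ((hmem G).mp hG c (mem_support_iff.mpr this))
  · intro s
    dsimp only
    by_cases h0 : (0 : Fin 2) ∈ s.1
    · rw [if_pos h0]
      show IsHomogeneous (monomial (c + Finsupp.single 1 1) (1:K)) _
      refine isHomogeneous_monomial _ ?_
      rw [degree_eq_deg, deg_add, deg_single1]
      omega
    · rw [if_neg h0]
      show IsHomogeneous (-(monomial (c + Finsupp.single 0 1) (1:K))) _
      refine IsHomogeneous.neg ?_
      refine isHomogeneous_monomial _ ?_
      rw [degree_eq_deg, deg_add, deg_single0]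
      omega

end Betti1


/-! ### No Betti numbers in homological degree ≥ 2 -/

section BettiHigh

variable {J : Ideal (MvPolynomial (Fin 2) K)}

lemma no_big_subset {p : ℕ} (s : {s : Finset (Fin 2) // s.card = p + 3}) : False := by
  have h1 : s.1.card ≤ 2 := le_trans (Finset.card_le_card (Finset.subset_univ _)) (by simp)
  omega

lemma betti_le_one {p q : ℕ} (h : BettiNonzero J p q) : p ≤ 1 := by
  by_contra hp
  obtain ⟨f, hcyc, hnb, -⟩ := h
  match p, hp, f, hcyc, hnb with
  | 2, hp, f, hcyc, hnb =>
      apply hnb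
      have hf0 : f ⟨{0, 1}, by decide⟩ = 0 := by
        have h2 := congrFun (hcyc : koszulD f = 0) ⟨{0}, by decide⟩
        have h3 : ((koszulD f ⟨{0}, by decide⟩ : J) : MvPolynomial (Fin 2) K) = 0 := by
          rw [h2]; rfl
        rw [koszulD_apply10] at h3
        have h5 := (mul_eq_zero.mp (neg_eq_zero.mp h3)).resolve_left (X_ne_zero 1)
        exact Subtype.ext h5
      refine ⟨0, ?_⟩
      rw [koszulD_zero]
      funext s
      rw [term2_eq s, hf0]
      rfl
  | (p + 3), hp, f, hcyc, hnb =>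
      apply hnb
      exact ⟨fun s => (no_big_subset s).elim, funext fun s => (no_big_subset s).elim⟩

end BettiHigh


/-! ### Staircase combinatorics -/

section Staircase

variable (E : Set Exps)

def row (b : ℕ) : Set ℕ := {x | mk x b ∈ E}
noncomputable def mrow (b : ℕ) : ℕ := sInf (row E b)
noncomputable def ymin : ℕ := sInf ((fun a => a 1) '' E)
noncomputable def xmin : ℕ := sInf ((fun a => a 0) '' E)

variable {E}

lemma ymin_le {a : Exps} (ha : a ∈ E) : ymin E ≤ a 1 := Nat.sInf_le ⟨a, ha, rfl⟩

lemma xmin_le {a : Exps} (ha : a ∈ E) : xmin E ≤ a 0 := Nat.sInf_le ⟨a, ha, rfl⟩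

lemma exists_ymin (hne : E.Nonempty) : ∃ a ∈ E, a 1 = ymin E := by
  have : (ymin E) ∈ ((fun a => a 1) '' E) := Nat.sInf_mem (hne.image _)
  obtain ⟨a, ha, h⟩ := this
  exact ⟨a, ha, h⟩

lemma exists_xmin (hne : E.Nonempty) : ∃ a ∈ E, a 0 = xmin E := by
  have : (xmin E) ∈ ((fun a => a 0) '' E) := Nat.sInf_mem (hne.image _)
  obtain ⟨a, ha, h⟩ := this
  exact ⟨a, ha, h⟩

lemma row_nonempty (hup : UpSet E) (hne : E.Nonempty) {b : ℕ} (hb : ymin E ≤ b) :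
    (row E b).Nonempty := by
  obtain ⟨a, ha, hy⟩ := exists_ymin hne
  refine ⟨a 0, ?_⟩
  show mk (a 0) b ∈ E
  refine hup ha ?_
  rw [← mk_eta a, exps_le_iff]
  simp [hy, hb]

lemma mrow_mem (h : (row E b).Nonempty) : mk (mrow E b) b ∈ E := Nat.sInf_mem h

lemma mrow_le {x b : ℕ} (h : mk x b ∈ E) : mrow E b ≤ x := Nat.sInf_le h

lemma not_mem_of_lt_mrow {x b : ℕ} (h : x < mrow E b) : mk x b ∉ E :=
  fun hx => absurd (mrow_le hx) (by omega)

lemma mrow_step (hup : UpSet E) {b : ℕ} (h : (row E b).Nonempty) :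
    mrow E (b + 1) ≤ mrow E b := by
  refine mrow_le (hup (mrow_mem h) ?_)
  rw [exps_le_iff]; simp

lemma mrow_antitone (hup : UpSet E) (hne : E.Nonempty) {b b' : ℕ}
    (hb : ymin E ≤ b) (hbb : b ≤ b') : mrow E b' ≤ mrow E b := by
  induction b' with
  | zero =>
      have hb0 : b = 0 := by omega
      subst hb0
      exact le_rfl
  | succ b' ih =>
      rcases Nat.lt_or_ge b (b' + 1) with h | h
      · have h1 : b ≤ b' := by omega
        exact le_trans (mrow_step hup (row_nonempty hup hne (show ymin E ≤ b' by omega))) (ih h1)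
      · have : b = b' + 1 := by omega
        subst this; rfl

lemma xmin_le_mrow (h : (row E b).Nonempty) : xmin E ≤ mrow E b := by
  have := xmin_le (mrow_mem h)
  simpa using this

lemma mrow_le_xmin (hup : UpSet E) {y₀ b : ℕ}
    (h : mk (xmin E) y₀ ∈ E) (hb : y₀ ≤ b) : mrow E b ≤ xmin E := by
  refine mrow_le (hup h ?_)
  rw [exps_le_iff]
  simp [hb]

lemma mrow_flat (hup : UpSet E) (hne : E.Nonempty) {v : ℕ} (hv : ymin E ≤ v) :
    ∀ t, v ≤ t → (∀ s, v ≤ s → s < t → ¬ mrow E (s + 1) < mrow E s) →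
      mrow E t = mrow E v := by
  intro t
  induction t with
  | zero => intro h _; have : v = 0 := by omega
            subst this; rfl
  | succ t ih =>
      intro hvt hnd
      rcases Nat.lt_or_ge t v with h | h
      · have : v = t + 1 := by omega
        subst this; rfl
      · have h1 : mrow E (t + 1) = mrow E t := by
          have hle := mrow_step hup (row_nonempty hup hne (show ymin E ≤ t by omega))
          have := hnd t h (by omega)
          omega
        rw [h1]
        exact ih h (fun s hs hst => hnd s hs (by omega))

lemma corner_of_drop (hup : UpSet E) (hne : E.Nonempty) {t : ℕ} (ht : ymin E ≤ t)
    (hd : mrow E (t + 1) < mrow E t) :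
    Corner E (mk (mrow E t - 1) t) ∧ deg (mk (mrow E t - 1) t) + 1 = mrow E t + t := by
  have hpos : 1 ≤ mrow E t := by omega
  constructor
  · refine ⟨not_mem_of_lt_mrow (by omega), ?_, ?_⟩
    · have : mk (mrow E t - 1) t + Finsupp.single 0 1 = mk (mrow E t) t := by
        rw [mk, mk]
        rw [show mrow E t = (mrow E t - 1) + 1 by omega, Finsupp.single_add]
        ext i; fin_cases i <;> simp [Finsupp.single_apply] <;> omega
      rw [this]
      exact mrow_mem (row_nonempty hup hne ht)
    · have : mk (mrow E t - 1) t + Finsupp.single 1 1 = mk (mrow E t - 1) (t + 1) := by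
        rw [mk, mk, Finsupp.single_add]
        abel
      rw [this]
      refine hup (mrow_mem (row_nonempty hup hne (show ymin E ≤ t + 1 by omega))) ?_
      rw [exps_le_iff]
      refine ⟨?_, ?_⟩
      · rw [mk_apply0, mk_apply0]
        omega
      · rw [mk_apply1, mk_apply1]
  · simp [deg]
    omega

end Staircase


/-! ### Bounds on minimal generators and corners -/

section Bounds

variable {E : Set Exps}

lemma sub_single0 (e : Exps) : e - Finsupp.single 0 1 = mk (e 0 - 1) (e 1) := by
  ext i
  rcases fin2_cases i with h | h <;> subst h <;>
    simp [Finsupp.tsub_apply, Finsupp.single_apply]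

lemma sub_single1 (e : Exps) : e - Finsupp.single 1 1 = mk (e 0) (e 1 - 1) := by
  ext i
  rcases fin2_cases i with h | h <;> subst h <;>
    simp [Finsupp.tsub_apply, Finsupp.single_apply]

lemma add_single0 (e : Exps) : e + Finsupp.single 0 1 = mk (e 0 + 1) (e 1) := by
  ext i
  rcases fin2_cases i with h | h <;> subst h <;>
    simp [Finsupp.add_apply, Finsupp.single_apply]

lemma add_single1 (e : Exps) : e + Finsupp.single 1 1 = mk (e 0) (e 1 + 1) := by
  ext i
  rcases fin2_cases i with h | h <;> subst h <;>
    simp [Finsupp.add_apply, Finsupp.single_apply]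

lemma mem_row_self {e : Exps} (he : e ∈ E) : e 0 ∈ row E (e 1) := by
  show mk (e 0) (e 1) ∈ E
  rw [mk_eta]; exact he

lemma gt_mrow_of_not_mem (hup : UpSet E) {x b : ℕ} (hne : (row E b).Nonempty)
    (h : mk x b ∉ E) : x < mrow E b := by
  by_contra hcon
  push_neg at hcon
  refine h (hup (mrow_mem hne) ?_)
  rw [exps_le_iff]
  simp [hcon]

lemma minGen_eq_mrow (hup : UpSet E) {e : Exps} (he : MinGen E e) :
    e 0 = mrow E (e 1) := by
  have h1 : mrow E (e 1) ≤ e 0 := mrow_le (by rw [mk_eta]; exact he.1)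
  rcases Nat.eq_or_lt_of_le h1 with h | h
  · omega
  · exfalso
    have h0 : e 0 ≠ 0 := by omega
    refine he.2 0 h0 ?_
    rw [sub_single0]
    refine hup (mrow_mem ⟨e 0, mem_row_self he.1⟩) ?_
    rw [exps_le_iff]
    constructor <;> simp
    omega

lemma minGen_bound (hup : UpSet E) (hne : E.Nonempty) {y₀ : ℕ}
    (hy₀ : mk (xmin E) y₀ ∈ E) {e : Exps} (he : MinGen E e) :
    deg e ≤ mrow E (ymin E) + y₀ := by
  have hbE : ymin E ≤ e 1 := ymin_le he.1
  have ha : e 0 = mrow E (e 1) := minGen_eq_mrow hup he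
  have h1 : mrow E (e 1) ≤ mrow E (ymin E) := mrow_antitone hup hne le_rfl hbE
  have hy₀y : ymin E ≤ y₀ := by
    have := ymin_le hy₀
    simpa using this
  have hb : e 1 ≤ y₀ := by
    by_contra hcon
    push_neg at hcon
    have hb1 : e 1 ≠ 0 := by omega
    have hnm : mk (e 0) (e 1 - 1) ∉ E := by
      rw [← sub_single1]
      exact he.2 1 hb1
    have hgt : e 0 < mrow E (e 1 - 1) :=
      gt_mrow_of_not_mem hup (row_nonempty hup hne (show ymin E ≤ e 1 - 1 by omega)) hnm
    have hlex : mrow E (e 1 - 1) ≤ xmin E := mrow_le_xmin hup hy₀ (by omega)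
    have : xmin E ≤ e 0 := xmin_le he.1
    omega
  rw [deg, ha]
  omega

lemma corner_bound (hup : UpSet E) (hne : E.Nonempty) {y₀ : ℕ}
    (hy₀ : mk (xmin E) y₀ ∈ E) {c : Exps} (hc : Corner E c) :
    deg c + 1 ≤ mrow E (ymin E) + y₀ := by
  have h0 : mk (c 0 + 1) (c 1) ∈ E := by rw [← add_single0]; exact hc.2.1
  have h1 : mk (c 0) (c 1 + 1) ∈ E := by rw [← add_single1]; exact hc.2.2
  have hby : ymin E ≤ c 1 := by
    have := ymin_le h0
    simpa using this
  have hm1 : mrow E (c 1) ≤ c 0 + 1 := mrow_le h0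
  have hm2 : c 0 < mrow E (c 1) := by
    refine gt_mrow_of_not_mem hup ⟨c 0 + 1, h0⟩ ?_
    rw [mk_eta]; exact hc.1
  have hm3 : mrow E (c 1 + 1) ≤ c 0 := mrow_le h1
  have h4 : mrow E (c 1) ≤ mrow E (ymin E) := mrow_antitone hup hne le_rfl hby
  have hb : c 1 < y₀ := by
    by_contra hcon
    push_neg at hcon
    have h5 : mrow E (c 1) ≤ xmin E := mrow_le_xmin hup hy₀ hcon
    have h6 : xmin E ≤ mrow E (c 1 + 1) := xmin_le_mrow ⟨c 0, h1⟩
    omega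
  rw [deg]
  omega

lemma bottom_minGen (hup : UpSet E) (hne : E.Nonempty) :
    MinGen E (mk (mrow E (ymin E)) (ymin E)) ∧
      deg (mk (mrow E (ymin E)) (ymin E)) = mrow E (ymin E) + ymin E := by
  have hrow : (row E (ymin E)).Nonempty := row_nonempty hup hne le_rfl
  refine ⟨⟨mrow_mem hrow, ?_⟩, by simp [deg]⟩
  intro i hi
  rcases fin2_cases i with h | h <;> subst h
  · rw [sub_single0, mk_apply0, mk_apply1]
    exact not_mem_of_lt_mrow (by simp at hi ⊢; omega)
  · rw [sub_single1, mk_apply0, mk_apply1]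
    intro hmem
    have := ymin_le hmem
    simp at hi this
    omega

end Bounds

end RegAux

open RegAux in
/-- Let `K` be a field and `I` a non-zero monomial ideal in
`S = K[x₁,x₂]`. Then `reg(Ī) ≤ reg(I)`. -/
theorem stmt_0 {K : Type*} [Field K] (I : Ideal (MvPolynomial (Fin 2) K))
    (hmono : IsMonomialIdeal I) (hne : I ≠ ⊥) :
    reg (intCl I) ≤ reg I := by
  classical
  have hmono' : ∃ A : Set (Fin 2 →₀ ℕ),
      I = Ideal.span ((fun a => (monomial a (1 : K))) '' A) := hmono
  have hupE : UpSet (Eset I) := Eset_up I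
  have hupEb : UpSet (Ebar I) := Ebar_up I
  have hsub : Eset I ⊆ Ebar I := Eset_subset_Ebar I
  have memI : ∀ p : MvPolynomial (Fin 2) K, p ∈ I ↔ ∀ m ∈ p.support, m ∈ Eset I :=
    fun p => mem_I_iff I hmono'
  have memCl : ∀ p : MvPolynomial (Fin 2) K,
      p ∈ intCl I ↔ ∀ m ∈ p.support, m ∈ Ebar I := by
    intro p
    rw [intCl, intCl_gen_eq]
    exact mem_MIdeal_iff hupEb
  have hEne : (Eset I).Nonempty := by
    obtain ⟨x, hxI, hx0⟩ := Submodule.exists_mem_ne_zero_of_ne_bot hne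
    obtain ⟨m, hm⟩ := MvPolynomial.support_nonempty.mpr hx0
    exact ⟨m, (memI x).mp hxI m hm⟩
  have hy : ∀ a ∈ Ebar I, ymin (Eset I) ≤ a 1 :=
    fun a ha => Ebar_coord_bound I hmono' 1 _ (fun b hb => ymin_le hb) ha
  have hx : ∀ a ∈ Ebar I, xmin (Eset I) ≤ a 0 :=
    fun a ha => Ebar_coord_bound I hmono' 0 _ (fun b hb => xmin_le hb) ha
  obtain ⟨astar, hastar, hxstar⟩ := exists_xmin hEne
  have hy₀ : mk (xmin (Eset I)) (astar 1) ∈ Eset I := by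
    rw [← hxstar, mk_eta]; exact hastar
  have hreg : reg I = sSup {r : ℕ | ∃ p q : ℕ, BettiNonzero I p q ∧ q - p = r} := rfl
  have hBdd : BddAbove {r : ℕ | ∃ p q : ℕ, BettiNonzero I p q ∧ q - p = r} := by
    refine ⟨mrow (Eset I) (ymin (Eset I)) + astar 1, ?_⟩
    rintro r ⟨p, q, hbet, rfl⟩
    have hp := betti_le_one hbet
    interval_cases p
    · obtain ⟨e, he, hdeg⟩ := betti0_to memI hbet
      have := minGen_bound hupE hEne hy₀ he
      omega
    · rcases betti1_to memI hbet with hq | ⟨c, hc, hdeg⟩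
      · omega
      · have := corner_bound hupE hEne hy₀ hc
        omega
  have hcornerR : ∀ c, Corner (Eset I) c → deg c + 1 ≤ reg I := by
    intro c hc
    have hb := betti1_from memI hc
    rw [hreg]
    exact le_csSup hBdd ⟨1, deg c + 2, hb, by omega⟩
  have hgenR : mrow (Eset I) (ymin (Eset I)) + ymin (Eset I) ≤ reg I := by
    obtain ⟨hmg, hd⟩ := bottom_minGen hupE hEne
    have hb := betti0_from memI hmg
    rw [hreg]
    exact le_csSup hBdd ⟨0, _, hb, by rw [Nat.sub_zero, hd]⟩
  -- The key "drop" lemma, transferring drops of the staircase of the integral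
  -- closure to corners or the bottom generator of `I`.
  have drop : ∀ v w : ℕ, mk w (v + 1) ∈ Ebar I → (row (Ebar I) v).Nonempty →
      w < mrow (Ebar I) v → mrow (Ebar I) v + v ≤ reg I := by
    intro v w hw hrow hlt
    have hvy : ymin (Eset I) ≤ v := by
      obtain ⟨x, hxr⟩ := hrow
      have := hy _ hxr
      simpa using this
    have hmEb_le : mrow (Ebar I) v ≤ mrow (Eset I) v :=
      Nat.sInf_le (hsub (mrow_mem (row_nonempty hupE hEne hvy)))
    by_cases hdrop : ∃ t, v ≤ t ∧ mrow (Eset I) (t + 1) < mrow (Eset I) t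
    · obtain ⟨ht₀v, ht₀d⟩ := Nat.find_spec hdrop
      have hflat : mrow (Eset I) (Nat.find hdrop) = mrow (Eset I) v := by
        refine mrow_flat hupE hEne hvy (Nat.find hdrop) ht₀v ?_
        intro s hs hst hds
        exact (Nat.find_min hdrop hst) ⟨hs, hds⟩
      obtain ⟨hcor, hdeg⟩ := corner_of_drop hupE hEne (le_trans hvy ht₀v) ht₀d
      have := hcornerR _ hcor
      omega
    · push_neg at hdrop
      have hflat : mrow (Eset I) (max v (astar 1)) = mrow (Eset I) v := by
        refine mrow_flat hupE hEne hvy (max v (astar 1)) (le_max_left _ _) ?_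
        intro s hs _
        have := hdrop s hs
        omega
      have hle2 : mrow (Eset I) (max v (astar 1)) ≤ xmin (Eset I) :=
        mrow_le_xmin hupE hy₀ (le_max_right _ _)
      have hxw : xmin (Eset I) ≤ w := by
        have := hx _ hw
        simpa using this
      omega
  have hAb : ∀ r ∈ {r : ℕ | ∃ p q : ℕ, BettiNonzero (intCl I) p q ∧ q - p = r},
      r ≤ reg I := by
    rintro r ⟨p, q, hbet, rfl⟩
    have hp := betti_le_one hbet
    interval_cases p
    · obtain ⟨e, he, hdeg⟩ := betti0_to memCl hbet
      have hdege : deg e = e 0 + e 1 := rfl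
      have hbEb : ymin (Eset I) ≤ e 1 := by
        have := hy _ he.1
        omega
      by_cases hcase : 1 ≤ e 1 ∧ (row (Ebar I) (e 1 - 1)).Nonempty
      · have hnm : mk (e 0) (e 1 - 1) ∉ Ebar I := by
          rw [← sub_single1]
          exact he.2 1 (by omega)
        have hlt : e 0 < mrow (Ebar I) (e 1 - 1) :=
          gt_mrow_of_not_mem hupEb hcase.2 hnm
        have hd : mrow (Ebar I) (e 1 - 1) + (e 1 - 1) ≤ reg I := by
          refine drop (e 1 - 1) (e 0) ?_ hcase.2 hlt
          rw [show e 1 - 1 + 1 = e 1 by omega, mk_eta]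
          exact he.1
        omega
      · have hb0 : e 1 = ymin (Eset I) := by
          rcases Nat.eq_or_lt_of_le hbEb with h | h
          · omega
          · exfalso
            have h1 : 1 ≤ e 1 := by omega
            refine hcase ⟨h1, ?_⟩
            obtain ⟨x, hxr⟩ := row_nonempty hupE hEne (show ymin (Eset I) ≤ e 1 - 1 by omega)
            exact ⟨x, hsub hxr⟩
        have ha : e 0 = mrow (Ebar I) (e 1) := minGen_eq_mrow hupEb he
        have hle : mrow (Ebar I) (e 1) ≤ mrow (Eset I) (e 1) :=
          Nat.sInf_le (hsub (mrow_mem (row_nonempty hupE hEne (by omega))))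
        rw [hb0] at ha hle
        omega
    · rcases betti1_to memCl hbet with hq | ⟨c, hc, hdeg⟩
      · omega
      · have h0 : mk (c 0 + 1) (c 1) ∈ Ebar I := by
          rw [← add_single0]; exact hc.2.1
        have h1 : mk (c 0) (c 1 + 1) ∈ Ebar I := by
          rw [← add_single1]; exact hc.2.2
        have hm2 : c 0 < mrow (Ebar I) (c 1) := by
          refine gt_mrow_of_not_mem hupEb ⟨_, h0⟩ ?_
          rw [mk_eta]; exact hc.1
        have hd := drop (c 1) (c 0) h1 ⟨_, h0⟩ hm2
        have hm1 : mrow (Ebar I) (c 1) ≤ c 0 + 1 := mrow_le h0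
        have hdegc : deg c = c 0 + c 1 := rfl
        omega
  show sSup {r : ℕ | ∃ p q : ℕ, BettiNonzero (intCl I) p q ∧ q - p = r} ≤ reg I
  rcases Set.eq_empty_or_nonempty
      {r : ℕ | ∃ p q : ℕ, BettiNonzero (intCl I) p q ∧ q - p = r} with h | h
  · rw [h, csSup_empty]
    exact bot_le
  · exact csSup_le h hAb
end

section
/- Let I ⊆ S = K[x_1, x_2] be an equigenerated monomial ideal of degree d. Then reg(I) = d if and only if I has linear quotients. -/
open MvPolynomial

namespace S4
set_option linter.unusedSectionVars false


variable {K : Type*} [Field K]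

/-- exponent finsupp (p, q) on Fin 2 -/
noncomputable def mu (p q : ℕ) : Fin 2 →₀ ℕ := Finsupp.single 0 p + Finsupp.single 1 q

@[simp] lemma mu_apply0 (p q : ℕ) : mu p q 0 = p := by
  simp [mu, Finsupp.single_apply]

@[simp] lemma mu_apply1 (p q : ℕ) : mu p q 1 = q := by
  simp [mu, Finsupp.single_apply]

lemma degree_fin2 (e : Fin 2 →₀ ℕ) : e.degree = e 0 + e 1 := by
  rw [Finsupp.degree_apply]
  rw [Finset.sum_subset (Finset.subset_univ e.support)]
  · exact Fin.sum_univ_two e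
  · intro x _ hx
    simpa using (Finsupp.notMem_support_iff.mp hx)

lemma upow (p q : ℕ) : (X 0 : MvPolynomial (Fin 2) K) ^ p * X 1 ^ q = monomial (mu p q) (1 : K) := by
  rw [X_pow_eq_monomial, X_pow_eq_monomial, monomial_mul, one_mul]; rfl

lemma mu_le_iff (p q : ℕ) (e : Fin 2 →₀ ℕ) : mu p q ≤ e ↔ p ≤ e 0 ∧ q ≤ e 1 := by
  constructor
  · intro h; exact ⟨by simpa using h 0, by simpa using h 1⟩
  · intro ⟨h0, h1⟩ i
    match i with
    | 0 => simpa using h0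
    | 1 => simpa using h1

variable {d m : ℕ} {a : Fin m → ℕ} {u : Fin m → MvPolynomial (Fin 2) K}

/-- core: coefficients of members of (sub)monomial ideals are divisible by a generator -/
lemma core (hu : ∀ i, u i = X 0 ^ a i * X 1 ^ (d - a i)) (T : Set (Fin m))
    {p : MvPolynomial (Fin 2) K} (hp : p ∈ Ideal.span (u '' T)) {e : Fin 2 →₀ ℕ}
    (he : coeff e p ≠ 0) : ∃ i ∈ T, a i ≤ e 0 ∧ d - a i ≤ e 1 := by
  induction hp using Submodule.span_induction generalizing e with
  | mem x hx =>
    obtain ⟨i, hi, rfl⟩ := hx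
    rw [hu i, upow] at he
    rw [coeff_monomial] at he
    split_ifs at he with h
    · exact ⟨i, hi, by simp [← h]⟩
    · exact absurd rfl he
  | zero => simp at he
  | add x y hx hy ihx ihy =>
    rw [coeff_add] at he
    rcases (by by_contra hc; push_neg at hc; simp [hc.1, hc.2] at he :
        coeff e x ≠ 0 ∨ coeff e y ≠ 0) with h | h
    · exact ihx h
    · exact ihy h
  | smul r x hx ih =>
    rw [smul_eq_mul, coeff_mul] at he
    obtain ⟨⟨e1, e2⟩, hmem, hne⟩ := Finset.exists_ne_zero_of_sum_ne_zero he
    have h2 : coeff e2 x ≠ 0 := fun h => hne (by simp [h])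
    obtain ⟨i, hi, h0, h1⟩ := ih h2
    have hee : e1 + e2 = e := Finset.HasAntidiagonal.mem_antidiagonal.mp hmem
    refine ⟨i, hi, ?_, ?_⟩
    · have : e 0 = e1 0 + e2 0 := by rw [← hee]; rfl
      omega
    · have : e 1 = e1 1 + e2 1 := by rw [← hee]; rfl
      omega

/-- membership of monomials divisible by a generator -/
lemma mem_mono (hu : ∀ i, u i = X 0 ^ a i * X 1 ^ (d - a i)) (T : Set (Fin m))
    {i : Fin m} (hi : i ∈ T) {e : Fin 2 →₀ ℕ} (h0 : a i ≤ e 0) (h1 : d - a i ≤ e 1) (c : K) :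
    monomial e c ∈ Ideal.span (u '' T) := by
  have hle : mu (a i) (d - a i) ≤ e := (mu_le_iff _ _ _).mpr ⟨h0, h1⟩
  have : monomial e c = u i * monomial (e - mu (a i) (d - a i)) c := by
    rw [hu i, upow, monomial_mul, one_mul, add_tsub_cancel_of_le hle]
  rw [this]
  exact Ideal.mul_mem_right _ _ (Ideal.subset_span ⟨i, hi, rfl⟩)

/-- if some monomial of p is not divisible then p beyond span; contrapositive form -/
lemma exists_bad_mono (hu : ∀ i, u i = X 0 ^ a i * X 1 ^ (d - a i)) (T : Set (Fin m))
    {p : MvPolynomial (Fin 2) K} (hp : p ∉ Ideal.span (u '' T)) :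
    ∃ e, coeff e p ≠ 0 ∧ ∀ i ∈ T, ¬(a i ≤ e 0 ∧ d - a i ≤ e 1) := by
  by_contra hc
  push_neg at hc
  apply hp
  rw [← support_sum_monomial_coeff p]
  refine Ideal.sum_mem _ (fun e he => ?_)
  obtain ⟨i, hi, hdvd⟩ := hc e (mem_support_iff.mp he)
  exact mem_mono hu T hi hdvd.1 hdvd.2 _

lemma degree_bound (hu : ∀ i, u i = X 0 ^ a i * X 1 ^ (d - a i)) (had : ∀ i, a i ≤ d)
    {p : MvPolynomial (Fin 2) K} (hp : p ∈ Ideal.span (Set.range u)) {e : Fin 2 →₀ ℕ}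
    (he : coeff e p ≠ 0) : d ≤ e 0 + e 1 := by
  rw [← Set.image_univ] at hp
  obtain ⟨i, _, h0, h1⟩ := core hu Set.univ hp he
  have := had i; omega


/-! Koszul computations for n = 2 -/

variable {I : Ideal (MvPolynomial (Fin 2) K)}

lemma kcongr {p : ℕ} (f : KoszulTerm I p) {s s' : Finset (Fin 2)} (h : s.card = p)
    (h' : s'.card = p) (hs : s = s') : f ⟨s, h⟩ = f ⟨s', h'⟩ := by subst hs; rfl

lemma card0 : (∅ : Finset (Fin 2)).card = 0 := rfl
lemma card00 : ({0} : Finset (Fin 2)).card = 1 := rfl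
lemma card01 : ({1} : Finset (Fin 2)).card = 1 := rfl
lemma card2 : ({0,1} : Finset (Fin 2)).card = 2 := by decide

lemma kD1_empty (f : KoszulTerm I 1) :
    koszulD f ⟨∅, card0⟩ = (X 0 : MvPolynomial (Fin 2) K) • f ⟨{0}, card00⟩ + (X 1 : MvPolynomial (Fin 2) K) • f ⟨{1}, card01⟩ := by
  rw [koszulD, Fin.sum_univ_two, dif_neg (by decide), dif_neg (by decide)]
  have h1 : (Finset.filter (fun i => i < (0:Fin 2)) (∅ : Finset (Fin 2))).card = 0 := by decide
  have h2 : (Finset.filter (fun i => i < (1:Fin 2)) (∅ : Finset (Fin 2))).card = 0 := by decide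
  rw [h1, h2, pow_zero, one_smul, one_smul]
  rw [kcongr f _ card00 (show insert (0:Fin 2) (∅:Finset (Fin 2)) = {0} by decide),
      kcongr f _ card01 (show insert (1:Fin 2) (∅:Finset (Fin 2)) = {1} by decide)]

lemma kD2_t0 (f : KoszulTerm I 2) :
    koszulD f ⟨{0}, card00⟩ = - ((X 1 : MvPolynomial (Fin 2) K) • f ⟨{0,1}, card2⟩) := by
  rw [koszulD, Fin.sum_univ_two, dif_pos (by decide), dif_neg (by decide)]
  have h2 : (Finset.filter (fun i => i < (1:Fin 2)) ({0} : Finset (Fin 2))).card = 1 := by decide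
  rw [h2, pow_one, neg_one_zsmul, kcongr f _ card2 (show insert (1:Fin 2) ({0}:Finset (Fin 2)) = {0,1} by decide), zero_add]

lemma kD2_t1 (f : KoszulTerm I 2) :
    koszulD f ⟨{1}, card01⟩ = (X 0 : MvPolynomial (Fin 2) K) • f ⟨{0,1}, card2⟩ := by
  rw [koszulD, Fin.sum_univ_two, dif_neg (by decide), dif_pos (by decide)]
  have h1 : (Finset.filter (fun i => i < (0:Fin 2)) ({1} : Finset (Fin 2))).card = 0 := by decide
  rw [h1, pow_zero, one_smul, kcongr f _ card2 (show insert (0:Fin 2) ({1}:Finset (Fin 2)) = {0,1} by decide), add_zero]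

lemma kD3 {p : ℕ} (g : KoszulTerm I (p+1)) {s : Finset (Fin 2)} (hs : s.card = p)
    (hall : ∀ j : Fin 2, j ∈ s) : koszulD g ⟨s, hs⟩ = 0 := by
  rw [koszulD]
  exact Finset.sum_eq_zero (fun j _ => dif_pos (hall j))

lemma sub1cases {s : Finset (Fin 2)} (hs : s.card = 1) : s = {0} ∨ s = {1} := by
  obtain ⟨x, rfl⟩ := Finset.card_eq_one.mp hs
  match x with
  | 0 => exact Or.inl rfl
  | 1 => exact Or.inr rfl

lemma sub2case {s : Finset (Fin 2)} (hs : s.card = 2) : s = {0, 1} := by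
  have := Finset.eq_univ_of_card s (by rw [hs]; rfl)
  rw [this]; decide

lemma sub0case {s : Finset (Fin 2)} (hs : s.card = 0) : s = ∅ := Finset.card_eq_zero.mp hs



/-! misc glue -/

lemma val_smul (r : MvPolynomial (Fin 2) K) (x : I) : ((r • x : I) : MvPolynomial (Fin 2) K) = r * (x : MvPolynomial (Fin 2) K) := rfl

lemma dom0_eq (s : {s : Finset (Fin 2) // s.card = 0}) : s = ⟨∅, card0⟩ :=
  Subtype.ext (sub0case s.2)

lemma coeff_X_mul_ne {j : Fin 2} {P : MvPolynomial (Fin 2) K} {v : Fin 2 →₀ ℕ}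
    (h : coeff v (X j * P) ≠ 0) :
    ∃ e, v = Finsupp.single j 1 + e ∧ coeff e P ≠ 0 := by
  rw [coeff_mul] at h
  obtain ⟨⟨e1, e2⟩, hmem, hne⟩ := Finset.exists_ne_zero_of_sum_ne_zero h
  have h1 : coeff e1 (X j : MvPolynomial (Fin 2) K) ≠ 0 := fun hh => hne (by simp [hh])
  have h2 : coeff e2 P ≠ 0 := fun hh => hne (by simp [hh])
  rw [coeff_X'] at h1
  split_ifs at h1 with hh
  · exact ⟨e2, by rw [hh]; exact (Finset.HasAntidiagonal.mem_antidiagonal.mp hmem).symm, h2⟩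
  · exact absurd rfl h1

lemma mono_factor (j : Fin 2) {e : Fin 2 →₀ ℕ} (h : e j ≠ 0) (c : K) :
    monomial e c = X j * monomial (e - Finsupp.single j 1) c := by
  rw [← pow_one (X j : MvPolynomial (Fin 2) K), X_pow_eq_monomial, monomial_mul, one_mul,
    add_tsub_cancel_of_le]
  intro i
  rcases eq_or_ne i j with rfl | hij
  · simpa [Finsupp.single_apply] using Nat.one_le_iff_ne_zero.mpr h
  · simp [Finsupp.single_apply, Ne.symm hij]

lemma homog_coeff_deg {P : MvPolynomial (Fin 2) K} {q : ℕ} (hP : P.IsHomogeneous q)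
    {e : Fin 2 →₀ ℕ} (he : coeff e P ≠ 0) : e 0 + e 1 = q := by
  rw [← degree_fin2]
  by_contra hc
  exact he (hP.coeff_eq_zero hc)

variable (hm : 1 ≤ m) (ha : StrictMono a) (had : ∀ i, a i ≤ d)
  (hu : ∀ i, u i = X 0 ^ a i * X 1 ^ (d - a i))
  (hI : I = Ideal.span (Set.range u))

include hu hI in
lemma mem_I_of_div {i : Fin m} {e : Fin 2 →₀ ℕ} (h0 : a i ≤ e 0) (h1 : d - a i ≤ e 1) (c : K) :
    monomial e c ∈ I := by
  rw [hI, ← Set.image_univ]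
  exact mem_mono hu Set.univ (Set.mem_univ i) h0 h1 c

include hu hI in
lemma coeff_mem_I {P : MvPolynomial (Fin 2) K} (hP : P ∈ I) {e : Fin 2 →₀ ℕ}
    (he : coeff e P ≠ 0) : ∃ i, a i ≤ e 0 ∧ d - a i ≤ e 1 := by
  rw [hI, ← Set.image_univ] at hP
  obtain ⟨i, _, h⟩ := core hu Set.univ hP he
  exact ⟨i, h⟩

include had hu hI in
lemma deg_ge {P : MvPolynomial (Fin 2) K} (hP : P ∈ I) {e : Fin 2 →₀ ℕ}
    (he : coeff e P ≠ 0) : d ≤ e 0 + e 1 := by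
  obtain ⟨i, h0, h1⟩ := coeff_mem_I hu hI hP he
  have := had i; omega

include had hu hI in
lemma split (hP : P ∈ I) (hq : ∀ e : Fin 2 →₀ ℕ, coeff e P ≠ 0 → e 0 + e 1 ≠ d) :
    ∃ A B, A ∈ I ∧ B ∈ I ∧ P = X 0 * A + X 1 * B := by
  have hPJ : P ∈ Ideal.span {(X 0 : MvPolynomial (Fin 2) K)} * I + Ideal.span {(X 1 : MvPolynomial (Fin 2) K)} * I := by
    rw [← support_sum_monomial_coeff P]
    refine Submodule.sum_mem _ fun e he => ?_
    have hce := mem_support_iff.mp he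
    obtain ⟨i, h0, h1⟩ := coeff_mem_I hu hI hP hce
    have hai := had i
    have hne := hq e hce
    by_cases hb : a i < e 0
    · refine Submodule.mem_sup_left (Ideal.mem_span_singleton_mul.mpr
        ⟨monomial (e - Finsupp.single 0 1) (coeff e P), ?_, (mono_factor 0 (by omega) _).symm⟩)
      refine mem_I_of_div hu hI (i := i) ?_ ?_ _
      · rw [Finsupp.tsub_apply, Finsupp.single_apply]; simp; omega
      · rw [Finsupp.tsub_apply, Finsupp.single_apply]; simp [h1]
    · have hc : d - a i < e 1 := by omega
      refine Submodule.mem_sup_right (Ideal.mem_span_singleton_mul.mpr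
        ⟨monomial (e - Finsupp.single 1 1) (coeff e P), ?_, (mono_factor 1 (by omega) _).symm⟩)
      refine mem_I_of_div hu hI (i := i) ?_ ?_ _
      · rw [Finsupp.tsub_apply, Finsupp.single_apply]; simp [h0]
      · rw [Finsupp.tsub_apply, Finsupp.single_apply]; simp; omega
  obtain ⟨y, hy, z, hz, hyz⟩ := Submodule.mem_sup.mp hPJ
  obtain ⟨A, hA, hAy⟩ := Ideal.mem_span_singleton_mul.mp hy
  obtain ⟨B, hB, hBz⟩ := Ideal.mem_span_singleton_mul.mp hz
  exact ⟨A, B, hA, hB, by rw [← hyz, hAy, hBz]⟩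

include hm ha had hu hI in
lemma b0_only (q : ℕ) : BettiNonzero I 0 q → q = d := by
  · rintro ⟨f, -, hnb, hhom⟩
    by_contra hqd
    apply hnb
    set P : MvPolynomial (Fin 2) K := (f ⟨∅, card0⟩ : MvPolynomial (Fin 2) K) with hPdef
    have hPI : P ∈ I := (f ⟨∅, card0⟩).2
    have hPq : P.IsHomogeneous q := by simpa using hhom ⟨∅, card0⟩
    rcases lt_or_gt_of_ne hqd with hlt | hgt
    · -- q < d : P = 0
      have hP0 : P = 0 := by
        by_contra h0
        obtain ⟨e, he⟩ := MvPolynomial.ne_zero_iff.mp h0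
        have := deg_ge had hu hI hPI he
        have := homog_coeff_deg hPq he
        omega
      refine ⟨0, funext fun s => ?_⟩
      rw [dom0_eq s]
      rw [kD1_empty]
      have : f ⟨∅, card0⟩ = 0 := Subtype.ext hP0
      simp [this]
    · -- q > d
      obtain ⟨A, B, hA, hB, hAB⟩ := split had hu hI hPI (fun e he => by
        have := homog_coeff_deg hPq he; omega)
      refine ⟨fun s => if (0 : Fin 2) ∈ s.val then ⟨A, hA⟩ else ⟨B, hB⟩, funext fun s => ?_⟩
      rw [dom0_eq s, kD1_empty]
      apply Subtype.ext
      have e0 : ((0:Fin 2) ∈ ({0} : Finset (Fin 2))) = True := by simp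
      have e1 : ((0:Fin 2) ∈ ({1} : Finset (Fin 2))) = False := by simp
      simp only [e0, e1, if_true, if_false]
      push_cast [val_smul]
      exact hAB.symm
include hm ha had hu hI in
lemma b0_d : BettiNonzero I 0 d := by
  · set i0 : Fin m := ⟨0, hm⟩
    have hmem : u i0 ∈ I := hI ▸ Ideal.subset_span (Set.mem_range_self i0)
    refine ⟨fun _ => ⟨u i0, hmem⟩, trivial, ?_, fun s => ?_⟩
    · rintro ⟨g, hg⟩
      have hval := congrArg (fun F => ((F ⟨∅, card0⟩ : I) : MvPolynomial (Fin 2) K)) hg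
      simp only at hval
      rw [kD1_empty] at hval
      push_cast [val_smul] at hval
      have hco := congrArg (coeff (mu (a i0) (d - a i0))) hval
      rw [hu i0, upow, coeff_monomial, if_pos rfl] at hco
      rw [coeff_add] at hco
      have hz : ∀ (j : Fin 2) (x : I), coeff (mu (a i0) (d - a i0)) (X j * (x : MvPolynomial (Fin 2) K)) = 0 := by
        intro j x
        by_contra hne
        obtain ⟨e, hev, hec⟩ := coeff_X_mul_ne hne
        have hdeg := deg_ge had hu hI x.2 hec
        have hv0 : (mu (a i0) (d - a i0)) 0 + (mu (a i0) (d - a i0)) 1 = (Finsupp.single j 1) 0 + e 0 + ((Finsupp.single j 1) 1 + e 1) := by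
          rw [hev]; simp only [Finsupp.add_apply]
        have hmu : (mu (a i0) (d - a i0)) 0 + (mu (a i0) (d - a i0)) 1 = d := by
          have := had i0; simp only [mu_apply0, mu_apply1]; omega
        have hsj : (Finsupp.single j 1) 0 + (Finsupp.single j 1) 1 = 1 := by
          match j with
          | 0 => simp
          | 1 => simp
        omega
      rw [smul_eq_mul, smul_eq_mul, hz 0, hz 1] at hco
      simp at hco
    · have : ((⟨u i0, hmem⟩ : I) : MvPolynomial (Fin 2) K) = u i0 := rfl
      rw [this, hu i0, upow]
      apply isHomogeneous_monomial
      rw [degree_fin2]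
      have := had i0
      simp; omega





/-! p = 1 analysis -/

lemma X_dvd_of_coeff {j : Fin 2} {P : MvPolynomial (Fin 2) K}
    (h : ∀ e, coeff e P ≠ 0 → e j ≠ 0) : (X j : MvPolynomial (Fin 2) K) ∣ P := by
  rw [X_dvd_iff_modMonomial_eq_zero]
  apply MvPolynomial.ext
  intro e
  rw [coeff_zero]
  by_cases hle : Finsupp.single j 1 ≤ e
  · exact coeff_modMonomial_of_le P hle
  · rw [coeff_modMonomial_of_not_le P hle]
    by_contra hc
    exact hle (Finsupp.single_le_iff.mpr (Nat.one_le_iff_ne_zero.mpr (h e hc)))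

lemma single_coords (j : Fin 2) : (Finsupp.single j 1) 0 + (Finsupp.single j 1) 1 = 1 := by
  match j with
  | 0 => simp
  | 1 => simp

lemma single0_add_mu (b c : ℕ) : Finsupp.single (0 : Fin 2) 1 + mu b c = mu (b+1) c := by
  rw [mu, mu, ← add_assoc, ← Finsupp.single_add, add_comm 1 b]

lemma single1_add_mu (b c : ℕ) : Finsupp.single (1 : Fin 2) 1 + mu b c = mu b (c+1) := by
  rw [mu, mu, add_comm (Finsupp.single (1:Fin 2) 1), add_assoc, ← Finsupp.single_add]


include ha had hu hI in
lemma socle_char {H : MvPolynomial (Fin 2) K} {e : ℕ}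
    (hHdeg : ∀ ε : Fin 2 →₀ ℕ, coeff ε H ≠ 0 → ε 0 + ε 1 = e) (hHn : H ∉ I)
    (h0 : X 0 * H ∈ I) (h1 : X 1 * H ∈ I) :
    ∃ j k : Fin m, (j : ℕ) + 1 = (k : ℕ) ∧ e + 2 = d + (a k - a j) := by
  have hHn' : H ∉ Ideal.span (u '' Set.univ) := by rwa [Set.image_univ, ← hI]
  obtain ⟨ε, hcε, hbad⟩ := exists_bad_mono hu Set.univ hHn'
  have hbad' : ∀ i : Fin m, ¬(a i ≤ ε 0 ∧ d - a i ≤ ε 1) := fun i => hbad i (Set.mem_univ i)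
  have hc0 : coeff (Finsupp.single 0 1 + ε) (X 0 * H) ≠ 0 := by rwa [coeff_X_mul]
  obtain ⟨i, hi0, hi1⟩ := coeff_mem_I hu hI h0 hc0
  have hc1 : coeff (Finsupp.single 1 1 + ε) (X 1 * H) ≠ 0 := by rwa [coeff_X_mul]
  obtain ⟨j, hj0, hj1⟩ := coeff_mem_I hu hI h1 hc1
  simp only [Finsupp.add_apply, Finsupp.single_apply] at hi0 hi1 hj0 hj1
  norm_num at hi0 hi1 hj0 hj1
  -- hi0 : a i ≤ 1 + ε 0, hi1 : d - a i ≤ ε 1, hj0 : a j ≤ ε 0, hj1 : d - a j ≤ 1 + ε 1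
  have hdeg := hHdeg ε hcε
  have hbi := hbad' i
  have hbj := hbad' j
  have hadi := had i
  have hadj := had j
  have hji : a j < a i := by omega
  have hjilt : j < i := ha.lt_iff_lt.mp hji
  have hkm : (j : ℕ) + 1 < m := by
    have := i.isLt
    have : (j:ℕ) < (i:ℕ) := hjilt
    omega
  set k : Fin m := ⟨(j:ℕ)+1, hkm⟩ with hk
  refine ⟨j, k, rfl, ?_⟩
  have hjk : j < k := by rw [Fin.lt_def]; simp [hk]
  have hak : a j < a k := ha hjk
  have hadk := had k
  rcases eq_or_lt_of_le (show (j:ℕ)+1 ≤ (i:ℕ) from hjilt) with heq | hlt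
  · have : k = i := Fin.ext heq
    subst this
    omega
  · exfalso
    have hki : k < i := by rw [Fin.lt_def]; exact hlt
    have haki : a k < a i := ha hki
    exact hbad' k (by omega)

include ha had hu hI in
lemma socle_exists {j k : Fin m} (hjk : (j : ℕ) + 1 = (k : ℕ)) :
    ∃ H : MvPolynomial (Fin 2) K,
      (∀ ε : Fin 2 →₀ ℕ, coeff ε H ≠ 0 → ε 0 + ε 1 = d + (a k - a j) - 2) ∧
      H ∉ I ∧ X 0 * H = monomial (mu (a k) (d - a j - 1)) (1:K) ∧
      X 1 * H = monomial (mu (a k - 1) (d - a j)) (1:K) ∧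
      X 0 * H ∈ I ∧ X 1 * H ∈ I := by
  have hjklt : j < k := by rw [Fin.lt_def]; omega
  have hajk : a j < a k := ha hjklt
  have hadk := had k
  have hadj := had j
  refine ⟨monomial (mu (a k - 1) (d - a j - 1)) 1, ?_, ?_, ?_, ?_, ?_, ?_⟩
  · intro ε hε
    rw [coeff_monomial] at hε
    split_ifs at hε with hh
    · rw [← hh]; simp; omega
    · exact absurd rfl hε
  · intro hmem
    have hc : coeff (mu (a k - 1) (d - a j - 1)) (monomial (mu (a k - 1) (d - a j - 1)) (1:K)) ≠ 0 := by
      rw [coeff_monomial, if_pos rfl]; exact one_ne_zero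
    obtain ⟨i, hi0, hi1⟩ := coeff_mem_I hu hI hmem hc
    simp only [mu_apply0, mu_apply1] at hi0 hi1
    have : a i < a k := by omega
    have hik : i < k := ha.lt_iff_lt.mp this
    have hij : i ≤ j := by rw [Fin.le_def]; have := Fin.lt_def.mp hik; omega
    have : a i ≤ a j := ha.le_iff_le.mpr hij
    omega
  · rw [← pow_one (X (0:Fin 2) : MvPolynomial (Fin 2) K), X_pow_eq_monomial, monomial_mul,
      one_mul, single0_add_mu, show a k - 1 + 1 = a k by omega]
  · rw [← pow_one (X (1:Fin 2) : MvPolynomial (Fin 2) K), X_pow_eq_monomial, monomial_mul,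
      one_mul, single1_add_mu, show d - a j - 1 + 1 = d - a j by omega]
  · rw [← pow_one (X (0:Fin 2) : MvPolynomial (Fin 2) K), X_pow_eq_monomial, monomial_mul,
      one_mul, single0_add_mu]
    have h1 : a k - 1 + 1 = a k := by omega
    rw [h1]
    exact mem_I_of_div hu hI (i := k) (by simp) (by simp; omega) _
  · rw [← pow_one (X (1:Fin 2) : MvPolynomial (Fin 2) K), X_pow_eq_monomial, monomial_mul,
      one_mul, single1_add_mu]
    have h1 : d - a j - 1 + 1 = d - a j := by omega
    rw [h1]
    exact mem_I_of_div hu hI (i := j) (by simp; omega) (by simp) _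

lemma dom1_cases (s : {s : Finset (Fin 2) // s.card = 1}) :
    s = ⟨{0}, card00⟩ ∨ s = ⟨{1}, card01⟩ := by
  rcases sub1cases s.2 with h | h
  · exact Or.inl (Subtype.ext h)
  · exact Or.inr (Subtype.ext h)

include ha had hu hI in
lemma b1_only (q : ℕ) : BettiNonzero I 1 q →
    ∃ j k : Fin m, (j : ℕ) + 1 = (k : ℕ) ∧ q = d + (a k - a j) := by
  rintro ⟨f, hcyc, hnb, hhom⟩
  have hcyc' : koszulD f = 0 := hcyc
  have hval := congrArg (fun F => ((F ⟨∅, card0⟩ : I) : MvPolynomial (Fin 2) K)) hcyc'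
  rw [kD1_empty] at hval
  push_cast [val_smul] at hval
  rw [smul_eq_mul, smul_eq_mul] at hval
  simp only [Pi.zero_apply, ZeroMemClass.coe_zero] at hval
  set F0 : MvPolynomial (Fin 2) K := (f ⟨{0}, card00⟩ : MvPolynomial (Fin 2) K) with hF0
  set F1 : MvPolynomial (Fin 2) K := (f ⟨{1}, card01⟩ : MvPolynomial (Fin 2) K) with hF1
  -- hval : X 0 * F0 + X 1 * F1 = 0
  have hF0z : ¬ F0 = 0 := by
    intro hF0z
    apply hnb
    have hF1z : F1 = 0 := by
      rw [hF0z, mul_zero, zero_add] at hval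
      exact (mul_eq_zero.mp hval).resolve_left (X_ne_zero 1)
    refine ⟨0, funext fun s => ?_⟩
    rcases dom1_cases s with rfl | rfl
    · rw [kD2_t0]; simp
      exact (Subtype.ext hF0z.symm : (0:I) = f ⟨{0}, card00⟩)
    · rw [kD2_t1]; simp
      exact (Subtype.ext hF1z.symm : (0:I) = f ⟨{1}, card01⟩)
  have hdvd : (X 1 : MvPolynomial (Fin 2) K) ∣ F0 := by
    apply X_dvd_of_coeff
    intro e he
    have h1 : coeff (Finsupp.single 0 1 + e) (X 0 * F0) ≠ 0 := by rwa [coeff_X_mul]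
    have h2 : coeff (Finsupp.single 0 1 + e) (X 1 * F1) ≠ 0 := by
      intro hz
      apply h1
      have : X 0 * F0 = - (X 1 * F1) := by linear_combination hval
      rw [this, coeff_neg, hz, neg_zero]
    obtain ⟨e', he', _⟩ := coeff_X_mul_ne h2
    have := congrArg (fun v : Fin 2 →₀ ℕ => v 1) he'
    simp only [Finsupp.add_apply, Finsupp.single_apply] at this
    norm_num at this
    omega
  obtain ⟨H', hH'⟩ := hdvd
  set H : MvPolynomial (Fin 2) K := -H' with hHdef
  have hF0H : F0 = -(X 1 * H) := by rw [hHdef, mul_neg, neg_neg]; exact hH'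
  have hF1H : F1 = X 0 * H := by
    have hX1 : (X 1 : MvPolynomial (Fin 2) K) ≠ 0 := X_ne_zero 1
    apply mul_left_cancel₀ hX1
    have : X 1 * F1 = -(X 0 * F0) := by linear_combination hval
    rw [this, hF0H]; ring
  have hXH0 : X 0 * H ∈ I := hF1H ▸ (f ⟨{1}, card01⟩).2
  have hXH1 : X 1 * H ∈ I := by
    have : X 1 * H = -F0 := by rw [hF0H]; ring
    rw [this]
    exact neg_mem (f ⟨{0}, card00⟩).2
  have hHnI : H ∉ I := by
    intro hH
    apply hnb
    refine ⟨fun _ => ⟨H, hH⟩, funext fun s => ?_⟩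
    rcases dom1_cases s with rfl | rfl
    · rw [kD2_t0]
      apply Subtype.ext
      push_cast [val_smul]
      rw [smul_eq_mul]
      exact hF0H.symm
    · rw [kD2_t1]
      apply Subtype.ext
      push_cast [val_smul]
      rw [smul_eq_mul]
      exact hF1H.symm
  have hhom1 : (F1 : MvPolynomial (Fin 2) K).IsHomogeneous (q - 1) := hhom ⟨{1}, card01⟩
  have hHne : H ≠ 0 := by
    intro h
    apply hF0z
    rw [hF0H, h, mul_zero, neg_zero]
  have hHdeg : ∀ ε : Fin 2 →₀ ℕ, coeff ε H ≠ 0 → ε 0 + ε 1 = q - 2 := by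
    intro ε hε
    have hc : coeff (Finsupp.single 0 1 + ε) (X 0 * H) ≠ 0 := by rwa [coeff_X_mul]
    rw [← hF1H] at hc
    have := homog_coeff_deg hhom1 hc
    simp only [Finsupp.add_apply, Finsupp.single_apply] at this
    norm_num at this
    omega
  have hq2 : q - 2 + 2 = q := by
    obtain ⟨ε, hε⟩ := MvPolynomial.ne_zero_iff.mp hHne
    have hc : coeff (Finsupp.single 0 1 + ε) (X 0 * H) ≠ 0 := by rwa [coeff_X_mul]
    rw [← hF1H] at hc
    have h1 := homog_coeff_deg hhom1 hc
    simp only [Finsupp.add_apply, Finsupp.single_apply] at h1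
    norm_num at h1
    omega
  obtain ⟨j, k, hjk, hsum⟩ := socle_char ha had hu hI hHdeg hHnI hXH0 hXH1
  exact ⟨j, k, hjk, by omega⟩

include ha had hu hI in
lemma b1_exists {j k : Fin m} (hjk : (j : ℕ) + 1 = (k : ℕ)) :
    BettiNonzero I 1 (d + (a k - a j)) := by
  obtain ⟨H, hHdeg, hHnI, hXH0eq, hXH1eq, hXH0, hXH1⟩ := socle_exists ha had hu hI hjk
  have hjklt : j < k := by rw [Fin.lt_def]; omega
  have hajk : a j < a k := ha hjklt
  have hadk := had k
  have hadj := had j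
  refine ⟨fun s => if (0 : Fin 2) ∈ s.val then ⟨-(X 1 * H), neg_mem hXH1⟩ else ⟨X 0 * H, hXH0⟩,
    ?_, ?_, ?_⟩
  · show koszulD _ = 0
    funext s
    rw [dom0_eq s, kD1_empty]
    apply Subtype.ext
    push_cast [val_smul]
    have e0 : ((0:Fin 2) ∈ ({0} : Finset (Fin 2))) = True := by simp
    have e1 : ((0:Fin 2) ∈ ({1} : Finset (Fin 2))) = False := by simp
    simp only [e0, e1, if_true, if_false]
    push_cast [Pi.zero_apply, ZeroMemClass.coe_zero, smul_eq_mul]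
    ring
  · rintro ⟨g, hg⟩
    have hval := congrArg (fun F => ((F ⟨{1}, card01⟩ : I) : MvPolynomial (Fin 2) K)) hg
    simp only at hval
    rw [kD2_t1] at hval
    have e1 : ((0:Fin 2) ∈ ({1} : Finset (Fin 2))) = False := by simp
    rw [val_smul] at hval
    simp only [e1, if_false] at hval
    have hgH : ((g ⟨{0,1}, card2⟩ : I) : MvPolynomial (Fin 2) K) = H :=
      mul_left_cancel₀ (X_ne_zero 0) hval
    exact hHnI (hgH ▸ (g ⟨{0,1}, card2⟩).2)
  · intro s
    by_cases h0 : (0 : Fin 2) ∈ s.val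
    · simp only [h0, if_true]
      show (-(X 1 * H) : MvPolynomial (Fin 2) K).IsHomogeneous _
      rw [hXH1eq]
      have : -(monomial (mu (a k - 1) (d - a j)) (1:K)) = monomial (mu (a k - 1) (d - a j)) (-1:K) := by
        rw [← map_neg]
      rw [this]
      apply isHomogeneous_monomial
      rw [degree_fin2]
      simp
      omega
    · simp only [h0, if_false]
      show ((X 0 * H : MvPolynomial (Fin 2) K)).IsHomogeneous _
      rw [hXH0eq]
      apply isHomogeneous_monomial
      rw [degree_fin2]
      simp
      omega

lemma b2_none (q : ℕ) : ¬ BettiNonzero I 2 q := by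
  rintro ⟨f, hcyc, hnb, -⟩
  have hcyc' : koszulD f = 0 := hcyc
  apply hnb
  have hval := congrArg (fun F => ((F ⟨{0}, card00⟩ : I) : MvPolynomial (Fin 2) K)) hcyc'
  rw [kD2_t0] at hval
  push_cast [val_smul] at hval
  have hfz : ((f ⟨{0,1}, card2⟩ : I) : MvPolynomial (Fin 2) K) = 0 := by
    have := neg_eq_zero.mp hval
    exact (mul_eq_zero.mp this).resolve_left (X_ne_zero 1)
  refine ⟨0, funext fun s => ?_⟩
  have hs : s = ⟨{0,1}, card2⟩ := Subtype.ext (sub2case s.2)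
  subst hs
  rw [kD3]
  · exact (Subtype.ext hfz.symm : (0:I) = f ⟨{0,1}, card2⟩)
  · intro j
    match j with
    | 0 => decide
    | 1 => decide

lemma bhigh_none (p q : ℕ) (hp : 3 ≤ p) : ¬ BettiNonzero I p q := by
  rintro ⟨f, -, hnb, -⟩
  apply hnb
  have hcard : ∀ r : ℕ, p ≤ r → ∀ s : Finset (Fin 2), s.card ≠ r := by
    intro r hr s hs
    have h1 : s.card ≤ 2 := by
      have := Finset.card_le_univ s
      simpa using this
    omega
  refine ⟨fun s => absurd s.2 (hcard (p+1) (by omega) s.1), funext fun s => ?_⟩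
  exact absurd s.2 (hcard p le_rfl s.1)


set_option maxHeartbeats 1000000

/-! regularity computation -/

include hm ha had hu hI in
lemma reg_eq_d_iff :
    reg I = d ↔ (∀ j k : Fin m, (j:ℕ) + 1 = (k:ℕ) → a k = a j + 1) := by
  have hdS : d ∈ { r : ℕ | ∃ p q : ℕ, BettiNonzero I p q ∧ q - p = r } :=
    ⟨0, d, b0_d hm ha had hu hI, Nat.sub_zero d⟩
  have hbdd : BddAbove { r : ℕ | ∃ p q : ℕ, BettiNonzero I p q ∧ q - p = r } := by
    refine ⟨2*d + 2, ?_⟩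
    rintro r ⟨p, q, hb, rfl⟩
    match p with
    | 0 =>
      have := b0_only hm ha had hu hI q hb
      omega
    | 1 =>
      obtain ⟨j, k, hjk, hq⟩ := b1_only ha had hu hI q hb
      have := had k
      omega
    | 2 => exact absurd hb (b2_none q)
    | (n+3) => exact absurd hb (bhigh_none (n+3) q (by omega))
  have hreg : reg I = sSup { r : ℕ | ∃ p q : ℕ, BettiNonzero I p q ∧ q - p = r } := rfl
  constructor
  · intro hregd j k hjk
    by_contra hne
    have hjklt : j < k := by rw [Fin.lt_def]; omega
    have hajk : a j < a k := ha hjklt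
    have hgap : a j + 2 ≤ a k := by omega
    have hmem : d + (a k - a j) - 1 ∈ { r : ℕ | ∃ p q : ℕ, BettiNonzero I p q ∧ q - p = r } :=
      ⟨1, d + (a k - a j), b1_exists ha had hu hI hjk, rfl⟩
    have := le_csSup hbdd hmem
    rw [← hreg, hregd] at this
    omega
  · intro hconsec
    rw [hreg]
    apply le_antisymm
    · apply csSup_le ⟨d, hdS⟩
      rintro r ⟨p, q, hb, rfl⟩
      match p with
      | 0 =>
        have := b0_only hm ha had hu hI q hb
        omega
      | 1 =>
        obtain ⟨j, k, hjk, hq⟩ := b1_only ha had hu hI q hb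
        have := hconsec j k hjk
        omega
      | 2 => exact absurd hb (b2_none q)
      | (n+3) => exact absurd hb (bhigh_none (n+3) q (by omega))
    · exact le_csSup hbdd hdS

/-! linear quotients -/

include ha hu in
lemma u_inj : Function.Injective u := by
  intro i j h
  rw [hu i, hu j, upow, upow] at h
  have hc := congrArg (coeff (mu (a i) (d - a i))) h
  rw [coeff_monomial, if_pos rfl, coeff_monomial] at hc
  split_ifs at hc with hmu
  · have := congrArg (fun v : Fin 2 →₀ ℕ => v 0) hmu
    simp only [mu_apply0] at this
    exact ha.injective this.symm
  · exact absurd hc one_ne_zero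

include ha had hu in
lemma u_as_monomial (i : Fin m) : u i = monomial (mu (a i) (d - a i)) (1:K) := by
  rw [hu i, upow]

lemma single0_add_mu_gen (T b c : ℕ) :
    Finsupp.single (0:Fin 2) T + mu b c = mu (T + b) c := by
  rw [mu, mu, ← add_assoc, ← Finsupp.single_add]

lemma mu_add_single1 (b c T : ℕ) :
    mu b c + Finsupp.single (1:Fin 2) T = mu b (c + T) := by
  rw [mu, mu, add_assoc, ← Finsupp.single_add]

lemma single1_add_mu_gen (T b c : ℕ) :
    Finsupp.single (1:Fin 2) T + mu b c = mu b (c + T) := by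
  rw [add_comm, mu_add_single1]

lemma mu_add_single0 (b c T : ℕ) :
    mu b c + Finsupp.single (0:Fin 2) T = mu (T + b) c := by
  rw [add_comm, single0_add_mu_gen]

include ha had hu in
lemma factor0 {p q : Fin m} (h1 : a q ≤ a p) :
    (X 0 : MvPolynomial (Fin 2) K) ^ (a p - a q) * u q = u p * X 1 ^ (a p - a q) := by
  have hpd := had p
  have hqd := had q
  rw [u_as_monomial ha had hu, u_as_monomial ha had hu, X_pow_eq_monomial, X_pow_eq_monomial,
    monomial_mul, monomial_mul, one_mul, single0_add_mu_gen, mu_add_single1,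
    show a p - a q + a q = a p from by omega,
    show d - a p + (a p - a q) = d - a q from by omega]

include ha had hu in
lemma factor1 {p q : Fin m} (h1 : a p ≤ a q) :
    (X 1 : MvPolynomial (Fin 2) K) ^ (a q - a p) * u q = u p * X 0 ^ (a q - a p) := by
  have hpd := had p
  have hqd := had q
  rw [u_as_monomial ha had hu, u_as_monomial ha had hu, X_pow_eq_monomial, X_pow_eq_monomial,
    monomial_mul, monomial_mul, one_mul, single1_add_mu_gen, mu_add_single0,
    show d - a q + (a q - a p) = d - a p from by omega,
    show a q - a p + a p = a q from by omega]

include hm ha had hu in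
lemma linquot_of_consec (hconsec : ∀ j k : Fin m, (j:ℕ) + 1 = (k:ℕ) → a k = a j + 1) :
    HasLinQuot (Set.range u) := by
  refine ⟨m, u, u_inj ha hu, rfl, ?_⟩
  intro k hk
  refine ⟨{1}, ?_⟩
  rw [Set.image_singleton]
  apply le_antisymm
  · intro r hr
    rw [Ideal.mem_colon_span_singleton] at hr
    rw [Ideal.mem_span_singleton]
    apply X_dvd_of_coeff
    intro e he
    by_contra he1
    have he1' : e 1 = 0 := by omega
    have hc : coeff (e + mu (a k) (d - a k)) (r * u k) ≠ 0 := by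
      rw [u_as_monomial ha had hu, coeff_mul_monomial, mul_one]
      exact he
    obtain ⟨p, hp, hp0, hp1⟩ := core hu {j : Fin m | j < k} hr hc
    have hpk : a p < a k := ha hp
    have hpd := had p
    have hkd := had k
    simp only [Finsupp.add_apply, mu_apply0, mu_apply1] at hp0 hp1
    omega
  · rw [Ideal.span_le, Set.singleton_subset_iff]
    have hk1 : (k:ℕ) - 1 < m := by have := k.isLt; omega
    set k' : Fin m := ⟨(k:ℕ) - 1, hk1⟩ with hk'
    have hkk' : (k':ℕ) + 1 = (k:ℕ) := by simp [hk']; omega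
    have hak := hconsec k' k hkk'
    have hkd := had k
    have hkk'lt : k' < k := by rw [Fin.lt_def]; omega
    show (X 1 : MvPolynomial (Fin 2) K) ∈ _
    rw [SetLike.mem_coe, Ideal.mem_colon_span_singleton]
    rw [u_as_monomial ha had hu, ← pow_one (X (1:Fin 2) : MvPolynomial (Fin 2) K),
      X_pow_eq_monomial, monomial_mul, one_mul, single1_add_mu_gen]
    exact mem_mono hu {j : Fin m | j < k} hkk'lt (by simp; omega) (by simp; omega) _


include ha had hu in
lemma consec_of_linquot (hlq : HasLinQuot (Set.range u)) :
    ∀ j k : Fin m, (j:ℕ) + 1 = (k:ℕ) → a k = a j + 1 := by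
  classical
  obtain ⟨M, w, hwinj, hwrange, hcolon⟩ := hlq
  intro j k hjk
  by_contra hne
  have hjklt : j < k := by rw [Fin.lt_def]; omega
  have hajk : a j < a k := ha hjklt
  have hgap : a j + 2 ≤ a k := by omega
  -- the permutation
  have hσex : ∀ t : Fin M, ∃ i : Fin m, u i = w t := by
    intro t
    have : w t ∈ Set.range u := hwrange ▸ Set.mem_range_self t
    exact this
  choose σ hσ using hσex
  have hσsurj : Function.Surjective σ := by
    intro i
    have : u i ∈ Set.range w := by rw [hwrange]; exact Set.mem_range_self i
    obtain ⟨t, ht⟩ := this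
    exact ⟨t, u_inj ha hu (by rw [hσ t, ht])⟩
  -- crossing time
  let P : ℕ → Prop := fun n => ∃ hn : n < M,
    (∃ i : Fin M, i ≤ ⟨n, hn⟩ ∧ σ i ≤ j) ∧ (∃ i : Fin M, i ≤ ⟨n, hn⟩ ∧ k ≤ σ i)
  have hPex : ∃ n, P n := by
    obtain ⟨t1, ht1⟩ := hσsurj j
    obtain ⟨t2, ht2⟩ := hσsurj k
    refine ⟨max (t1:ℕ) (t2:ℕ), ?_⟩
    have hn : max (t1:ℕ) (t2:ℕ) < M := by
      have := t1.isLt; have h2 := t2.isLt; omega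
    refine ⟨hn, ⟨t1, ?_, le_of_eq ht1⟩, ⟨t2, ?_, le_of_eq ht2.symm⟩⟩
    · rw [Fin.le_def]; simp
    · rw [Fin.le_def]; simp
  set n : ℕ := Nat.find hPex with hndef
  obtain ⟨hn, ⟨iL, hiL, hiLj⟩, ⟨iR, hiR, hiRk⟩⟩ := Nat.find_spec hPex
  set t : Fin M := ⟨n, hn⟩ with htdef
  have hpos : 0 < n := by
    rcases Nat.eq_zero_or_pos n with h0 | h
    · exfalso
      have hLn : (iL:ℕ) ≤ n := Fin.le_def.mp hiL
      have hRn : (iR:ℕ) ≤ n := Fin.le_def.mp hiR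
      have hLR : iL = iR := Fin.ext (by omega)
      have h1 := Fin.le_def.mp hiLj
      have h2 := Fin.le_def.mp hiRk
      rw [hLR] at h1
      omega
    · exact h
  have hmin := Nat.find_min hPex (show n - 1 < n by omega)
  have hn1 : n - 1 < M := by omega
  -- colon data
  obtain ⟨V, hV⟩ := hcolon t hpos
  set q : Fin m := σ t with hqdef
  have hwt : w t = u q := (hσ t).symm
  have himg : w '' {i : Fin M | i < t} = u '' (σ '' {i : Fin M | i < t}) := by
    rw [Set.image_image]
    exact Set.image_congr (fun i _ => (hσ i).symm)
  have hqd := had q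
  have hkd := had k
  have hjd := had j
  -- two cases
  rcases le_or_gt (σ t) j with hcase | hcase
  · -- previous all have index ≥ k
    have haq : a q ≤ a j := ha.le_iff_le.mpr hcase
    have hall : ∀ i : Fin M, i < t → k ≤ σ i := by
      intro i hit
      by_contra hik
      have hσij : σ i ≤ j := by
        rw [Fin.le_def]
        have h1 := Fin.lt_def.mp (lt_of_not_ge hik)
        omega
      apply hmin
      have hiRt : iR < t := by
        rcases lt_or_eq_of_le hiR with hlt | heq
        · exact hlt
        · exfalso
          rw [heq] at hiRk
          have := Fin.le_def.mp hiRk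
          have := Fin.le_def.mp hcase
          omega
      refine ⟨hn1, ⟨i, ?_, hσij⟩, ⟨iR, ?_, hiRk⟩⟩
      · have h1 : (i:ℕ) < n := Fin.lt_def.mp hit
        rw [Fin.le_def]; show (i:ℕ) ≤ n - 1; omega
      · have h1 : (iR:ℕ) < n := Fin.lt_def.mp hiRt
        rw [Fin.le_def]; show (iR:ℕ) ≤ n - 1; omega
    have hprev : ∀ p ∈ σ '' {i : Fin M | i < t}, a j + 2 ≤ a p := by
      rintro p ⟨i, hit, rfl⟩
      have : a k ≤ a (σ i) := ha.le_iff_le.mpr (hall i hit)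
      omega
    rcases Set.eq_empty_or_nonempty V with rfl | ⟨v, hv⟩
    · -- colon is ⊥ but contains X0-power
      have hi0 : (⟨0, by omega⟩ : Fin M) < t := by rw [Fin.lt_def]; exact hpos
      set p : Fin m := σ ⟨0, by omega⟩ with hpdef
      have hap : a j + 2 ≤ a p := hprev p ⟨_, hi0, rfl⟩
      have hmemcolon : (X 0 : MvPolynomial (Fin 2) K) ^ (a p - a q) ∈
          (Ideal.span (w '' {i : Fin M | i < t})).colon (Ideal.span {w t}) := by
        rw [Ideal.mem_colon_span_singleton, hwt, factor0 ha had hu (by omega)]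
        refine Ideal.mul_mem_right _ _ (Ideal.subset_span ?_)
        exact ⟨_, hi0, (hσ _).symm⟩
      rw [hV] at hmemcolon
      rw [Set.image_empty, Ideal.span_empty, Ideal.mem_bot] at hmemcolon
      exact pow_ne_zero _ (X_ne_zero 0) hmemcolon
    · -- X v in colon
      have hXv : (X v : MvPolynomial (Fin 2) K) ∈
          (Ideal.span (w '' {i : Fin M | i < t})).colon (Ideal.span {w t}) := by
        rw [hV]
        exact Ideal.subset_span ⟨v, hv, rfl⟩
      rw [Ideal.mem_colon_span_singleton, hwt, himg] at hXv
      have hXvmono : (X v : MvPolynomial (Fin 2) K) * u q =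
          monomial (Finsupp.single v 1 + mu (a q) (d - a q)) 1 := by
        rw [u_as_monomial ha had hu, ← pow_one (X v : MvPolynomial (Fin 2) K),
          X_pow_eq_monomial, monomial_mul, one_mul]
      rw [hXvmono] at hXv
      have hc : coeff (Finsupp.single v 1 + mu (a q) (d - a q))
          (monomial (Finsupp.single v 1 + mu (a q) (d - a q)) (1:K)) ≠ 0 := by
        rw [coeff_monomial, if_pos rfl]; exact one_ne_zero
      obtain ⟨p, hp, hp0, hp1⟩ := core hu _ hXv hc
      have hap := hprev p hp
      have hpd := had p
      simp only [Finsupp.add_apply, Finsupp.single_apply, mu_apply0, mu_apply1] at hp0 hp1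
      match v with
      | 0 => simp at hp0 hp1; omega
      | 1 => simp at hp0 hp1; omega
  · -- σ t ≥ k ; previous all have index ≤ j
    have hkq : k ≤ σ t := by rw [Fin.le_def]; have := Fin.lt_def.mp hcase; omega
    have haq : a k ≤ a q := ha.le_iff_le.mpr hkq
    have hall : ∀ i : Fin M, i < t → σ i ≤ j := by
      intro i hit
      by_contra hik
      have hσik : k ≤ σ i := by
        rw [Fin.le_def]
        have h1 := Fin.lt_def.mp (lt_of_not_ge hik)
        omega
      apply hmin
      have hiLt : iL < t := by
        rcases lt_or_eq_of_le hiL with hlt | heq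
        · exact hlt
        · exfalso
          rw [heq] at hiLj
          have := Fin.le_def.mp hiLj
          have := Fin.le_def.mp hkq
          omega
      refine ⟨hn1, ⟨iL, ?_, hiLj⟩, ⟨i, ?_, hσik⟩⟩
      · have h1 : (iL:ℕ) < n := Fin.lt_def.mp hiLt
        rw [Fin.le_def]; show (iL:ℕ) ≤ n - 1; omega
      · have h1 : (i:ℕ) < n := Fin.lt_def.mp hit
        rw [Fin.le_def]; show (i:ℕ) ≤ n - 1; omega
    have hprev : ∀ p ∈ σ '' {i : Fin M | i < t}, a p ≤ a j := by
      rintro p ⟨i, hit, rfl⟩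
      exact ha.le_iff_le.mpr (hall i hit)
    rcases Set.eq_empty_or_nonempty V with rfl | ⟨v, hv⟩
    · have hi0 : (⟨0, by omega⟩ : Fin M) < t := by rw [Fin.lt_def]; exact hpos
      set p : Fin m := σ ⟨0, by omega⟩ with hpdef
      have hap : a p ≤ a j := hprev p ⟨_, hi0, rfl⟩
      have hmemcolon : (X 1 : MvPolynomial (Fin 2) K) ^ (a q - a p) ∈
          (Ideal.span (w '' {i : Fin M | i < t})).colon (Ideal.span {w t}) := by
        rw [Ideal.mem_colon_span_singleton, hwt, factor1 ha had hu (by omega)]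
        refine Ideal.mul_mem_right _ _ (Ideal.subset_span ?_)
        exact ⟨_, hi0, (hσ _).symm⟩
      rw [hV] at hmemcolon
      rw [Set.image_empty, Ideal.span_empty, Ideal.mem_bot] at hmemcolon
      exact pow_ne_zero _ (X_ne_zero 1) hmemcolon
    · have hXv : (X v : MvPolynomial (Fin 2) K) ∈
          (Ideal.span (w '' {i : Fin M | i < t})).colon (Ideal.span {w t}) := by
        rw [hV]
        exact Ideal.subset_span ⟨v, hv, rfl⟩
      rw [Ideal.mem_colon_span_singleton, hwt, himg] at hXv
      have hXvmono : (X v : MvPolynomial (Fin 2) K) * u q =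
          monomial (Finsupp.single v 1 + mu (a q) (d - a q)) 1 := by
        rw [u_as_monomial ha had hu, ← pow_one (X v : MvPolynomial (Fin 2) K),
          X_pow_eq_monomial, monomial_mul, one_mul]
      rw [hXvmono] at hXv
      have hc : coeff (Finsupp.single v 1 + mu (a q) (d - a q))
          (monomial (Finsupp.single v 1 + mu (a q) (d - a q)) (1:K)) ≠ 0 := by
        rw [coeff_monomial, if_pos rfl]; exact one_ne_zero
      obtain ⟨p, hp, hp0, hp1⟩ := core hu _ hXv hc
      have hap := hprev p hp
      have hpd := had p
      simp only [Finsupp.add_apply, Finsupp.single_apply, mu_apply0, mu_apply1] at hp0 hp1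
      match v with
      | 0 => simp at hp0 hp1; omega
      | 1 => simp at hp0 hp1; omega


end S4

/-- Let `I ⊆ K[x₁,x₂]` be an equigenerated monomial ideal of degree `d`
(with minimal monomial generators `u i = x₁^{a i} x₂^{d - a i}`, `a 1 < ⋯ < a m`).
Then `reg I = d` iff `I` has linear quotients. -/
theorem stmt_4 {K : Type*} [Field K] (d m : ℕ) (hm : 1 ≤ m)
    (a : Fin m → ℕ) (ha : StrictMono a) (had : ∀ i, a i ≤ d)
    (u : Fin m → MvPolynomial (Fin 2) K)
    (hu : ∀ i, u i = X 0 ^ (a i) * X 1 ^ (d - a i))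
    (I : Ideal (MvPolynomial (Fin 2) K)) (hI : I = Ideal.span (Set.range u)) :
    reg I = d ↔ HasLinQuot (Set.range u) := by
  constructor
  · intro hreg
    exact S4.linquot_of_consec hm ha had hu ((S4.reg_eq_d_iff hm ha had hu hI).mp hreg)
  · intro hlq
    exact (S4.reg_eq_d_iff hm ha had hu hI).mpr (S4.consec_of_linquot ha had hu hlq)
end

section
/- Let I = I_1 + I_2 ⊆ S = K[x_1, x_2, x_3] be an equigenerated monomial ideal of degree d as in the Setting (with t = 2). If reg(I) = d, then c_2 − c_1 = 1. -/
open MvPolynomial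

lemma degree_fin3 (f : Fin 3 →₀ ℕ) : f.degree = f 0 + f 1 + f 2 := by
  rw [Finsupp.degree_apply, Finset.sum_subset (Finset.subset_univ _)
    (by intro x _ hx; simpa using Finsupp.notMem_support_iff.mp hx)]
  simp [Fin.sum_univ_three]

lemma span_mono_coeff {K : Type*} [Field K] {n : ℕ} {A : Set (Fin n →₀ ℕ)}
    {h : MvPolynomial (Fin n) K}
    (hh : h ∈ Ideal.span ((fun e => monomial e (1:K)) '' A)) :
    ∀ ν, coeff ν h ≠ 0 → ∃ e ∈ A, e ≤ ν := by
  refine Submodule.span_induction ?_ ?_ ?_ ?_ hh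
  · rintro x ⟨e, he, rfl⟩ ν hν
    rw [coeff_monomial] at hν
    split at hν
    · next heq => exact ⟨e, he, le_of_eq heq⟩
    · exact absurd rfl hν
  · intro ν hν; simp at hν
  · intro x y _ _ hx hy ν hν
    rw [coeff_add] at hν
    by_cases h0 : coeff ν x = 0
    · exact hy ν (by rw [h0, zero_add] at hν; exact hν)
    · exact hx ν h0
  · intro a x _ hx ν hν
    rw [smul_eq_mul, coeff_mul] at hν
    obtain ⟨⟨ν₁, ν₂⟩, hmem, hne⟩ := Finset.exists_ne_zero_of_sum_ne_zero hν
    obtain ⟨e, he, hle⟩ := hx ν₂ (right_ne_zero_of_mul hne)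
    exact ⟨e, he, hle.trans (le_add_self.trans (le_of_eq (Finset.HasAntidiagonal.mem_antidiagonal.mp hmem)))⟩

lemma mono_mem_span {K : Type*} [Field K] {n : ℕ} {A : Set (Fin n →₀ ℕ)}
    {e ν : Fin n →₀ ℕ} (he : e ∈ A) (hle : e ≤ ν) :
    monomial ν (1:K) ∈ Ideal.span ((fun e => monomial e (1:K)) '' A) := by
  have : monomial ν (1:K) = monomial (ν - e) 1 * monomial e 1 := by
    rw [monomial_mul, one_mul, tsub_add_cancel_of_le hle]
  rw [this]
  exact Ideal.mul_mem_left _ _ (Ideal.subset_span ⟨e, he, rfl⟩)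

lemma coeff_mem_span {K : Type*} [Field K] {n : ℕ} {A : Set (Fin n →₀ ℕ)}
    {h : MvPolynomial (Fin n) K}
    (hh : h ∈ Ideal.span ((fun e => monomial e (1:K)) '' A))
    {ν : Fin n →₀ ℕ} (hc : coeff ν h ≠ 0) :
    monomial ν (1:K) ∈ Ideal.span ((fun e => monomial e (1:K)) '' A) := by
  obtain ⟨e, he, hle⟩ := span_mono_coeff hh ν hc
  exact mono_mem_span he hle

lemma exists_of_coeff_X_mul {K : Type*} [Field K] {n : ℕ} {j : Fin n}
    {p : MvPolynomial (Fin n) K} {ν : Fin n →₀ ℕ} (h : coeff ν (X j * p) ≠ 0) :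
    ∃ ρ, ρ + Finsupp.single j 1 = ν ∧ coeff ρ p ≠ 0 := by
  rw [coeff_X_mul'] at h
  split at h
  · next hs =>
    exact ⟨ν - Finsupp.single j 1,
      tsub_add_cancel_of_le (Finsupp.single_le_iff.2
        (Nat.one_le_iff_ne_zero.2 (Finsupp.mem_support_iff.mp hs))), h⟩
  · exact absurd rfl h

lemma degree_add3 (f g : Fin 3 →₀ ℕ) : (f + g).degree = f.degree + g.degree := by
  simp [degree_fin3]; omega

lemma degree_single3 (i : Fin 3) (b : ℕ) : (Finsupp.single i b).degree = b := by
  fin_cases i <;> simp [degree_fin3, Finsupp.single_apply]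

lemma X_mul_mono {K : Type*} [Field K] {n : ℕ} (j : Fin n) (ν : Fin n →₀ ℕ) (c : K) :
    X j * monomial ν c = monomial (Finsupp.single j 1 + ν) c := by
  rw [show (X j : MvPolynomial (Fin n) K) = monomial (Finsupp.single j 1) 1 from rfl,
    monomial_mul, one_mul]

lemma betti_witness {K : Type*} [Field K] {A : Set (Fin 3 →₀ ℕ)}
    {I : Ideal (MvPolynomial (Fin 3) K)}
    (hIA : I = Ideal.span ((fun e => monomial e (1:K)) '' A))
    (i₁ i₂ : Fin 3) (hne : i₁ ≠ i₂) (ν₁ ν₂ : Fin 3 →₀ ℕ)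
    (hμ : ν₁ + Finsupp.single i₁ 1 = ν₂ + Finsupp.single i₂ 1)
    (h₁ : monomial ν₁ (1:K) ∈ I) (h₂ : monomial ν₂ (1:K) ∈ I)
    (ht : ∀ j : Fin 3, j ≠ i₂ → ∀ ρ : Fin 3 →₀ ℕ,
      ρ + Finsupp.single j 1 = ν₂ → monomial ρ (1:K) ∉ I)
    (q : ℕ) (hq : ν₂.degree + 1 = q) :
    BettiNonzero I 1 q := by
  classical
  have hdeg : ν₁.degree = ν₂.degree := by
    have := congrArg Finsupp.degree hμ
    rw [degree_add3, degree_add3, degree_single3, degree_single3] at this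
    omega
  have hμ' : Finsupp.single i₁ 1 + ν₁ = Finsupp.single i₂ 1 + ν₂ := by
    rw [add_comm, hμ, add_comm]
  set m₁ : I := ⟨monomial ν₁ 1, h₁⟩ with hm₁
  set m₂ : I := ⟨monomial ν₂ 1, h₂⟩ with hm₂
  refine ⟨fun s => if i₁ ∈ s.val then m₁ else if i₂ ∈ s.val then -m₂ else 0, ?_, ?_, ?_⟩
  · -- cycle
    show koszulD _ = 0
    funext s
    rcases s with ⟨s, hs0⟩
    obtain rfl := Finset.card_eq_zero.mp hs0
    have key : ∀ j ∈ (Finset.univ : Finset (Fin 3)),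
        ((X j : MvPolynomial (Fin 3) K) •
          (if i₁ ∈ ({j} : Finset (Fin 3)) then m₁ else if i₂ ∈ ({j} : Finset (Fin 3)) then -m₂ else 0))
        = (if i₁ = j then (X i₁ : MvPolynomial (Fin 3) K) • m₁ else 0)
          + (if i₂ = j then (X i₂ : MvPolynomial (Fin 3) K) • (-m₂) else 0) := by
      intro j _
      simp only [Finset.mem_singleton]
      by_cases h1 : i₁ = j <;> by_cases h2 : i₂ = j
      · exact absurd (h1.trans h2.symm) hne
      · subst h1; simp [h2]
      · subst h2; simp [hne]
      · simp [h1, h2]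
    show (∑ j : Fin 3,
      if h : j ∈ (∅ : Finset (Fin 3)) then 0
      else ((-1 : ℤ) ^ ((∅ : Finset (Fin 3)).filter (fun i => i < j)).card) •
        ((X j : MvPolynomial (Fin 3) K) •
          (if i₁ ∈ insert j (∅:Finset (Fin 3)) then m₁ else if i₂ ∈ insert j (∅:Finset (Fin 3)) then -m₂ else 0))) = (0 : I)
    rw [Finset.sum_congr rfl (fun j _ => dif_neg (Finset.notMem_empty j))]
    simp only [Finset.filter_empty, Finset.card_empty, pow_zero, one_smul,
      Finset.insert_empty]
    erw [Finset.sum_congr rfl key, Finset.sum_add_distrib,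
      Finset.sum_ite_eq, Finset.sum_ite_eq]
    simp only [Finset.mem_univ, if_true]
    apply Subtype.ext
    push_cast [hm₁, hm₂]
    simp only [smul_eq_mul, mul_neg, X_mul_mono, hμ']
    ring
  · -- not a boundary
    rintro ⟨g, hg⟩
    have hg2 := congrFun hg ⟨{i₂}, Finset.card_singleton _⟩
    have hco := congrArg (fun x : I => coeff ν₂ (x : MvPolynomial (Fin 3) K)) hg2
    simp only [koszulD] at hco
    rw [show ((if i₁ ∈ ({i₂} : Finset (Fin 3)) then m₁
        else if i₂ ∈ ({i₂} : Finset (Fin 3)) then -m₂ else 0 : I) : MvPolynomial (Fin 3) K)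
        = -(monomial ν₂ (1:K)) by
      rw [if_neg (by simpa using hne), if_pos (Finset.mem_singleton_self _)]; rfl] at hco
    rw [AddSubmonoidClass.coe_finset_sum, coeff_sum] at hco
    have hsne : (∑ j : Fin 3, coeff ν₂
        (((if h : j ∈ (({i₂} : Finset (Fin 3)) : Finset (Fin 3)) then (0:I)
          else ((-1 : ℤ) ^ ((({i₂} : Finset (Fin 3))).filter (fun i => i < j)).card) •
            ((X j : MvPolynomial (Fin 3) K) •
              g ⟨insert j ({i₂} : Finset (Fin 3)), by
                rw [Finset.card_insert_of_notMem h, Finset.card_singleton]⟩)) : I)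
          : MvPolynomial (Fin 3) K)) ≠ 0 := by
      rw [hco]
      simp
    obtain ⟨j, -, hj⟩ := Finset.exists_ne_zero_of_sum_ne_zero hsne
    by_cases hmem : j ∈ ({i₂} : Finset (Fin 3))
    · rw [dif_pos hmem] at hj
      simp at hj
    · rw [dif_neg hmem] at hj
      rw [Submodule.coe_smul_of_tower, SetLike.val_smul, smul_eq_mul, coeff_smul] at hj
      have hj' : coeff ν₂ ((X j : MvPolynomial (Fin 3) K) * _) ≠ 0 :=
        fun h0 => hj (by rw [h0, smul_zero])
      obtain ⟨ρ, hρ, hcρ⟩ := exists_of_coeff_X_mul hj'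
      refine ht j (by simpa using hmem) ρ hρ ?_
      rw [hIA]
      refine coeff_mem_span ?_ hcρ
      rw [← hIA]
      exact Submodule.coe_mem _
  · -- homogeneity
    intro s
    dsimp only
    split_ifs
    · exact isHomogeneous_monomial _ (by omega)
    · show MvPolynomial.IsHomogeneous (-(m₂ : MvPolynomial (Fin 3) K)) (q - 1)
      exact MvPolynomial.IsHomogeneous.neg (isHomogeneous_monomial _ (by omega))
    · show MvPolynomial.IsHomogeneous (0 : MvPolynomial (Fin 3) K) (q - 1)
      exact isHomogeneous_zero _ _ _


noncomputable def Texp (x y z : ℕ) : Fin 3 →₀ ℕ :=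
  Finsupp.single 0 x + Finsupp.single 1 y + Finsupp.single 2 z

@[simp] lemma Texp_apply0 (x y z : ℕ) : Texp x y z 0 = x := by
  simp [Texp, Finsupp.single_apply]

@[simp] lemma Texp_apply1 (x y z : ℕ) : Texp x y z 1 = y := by
  simp [Texp, Finsupp.single_apply]

@[simp] lemma Texp_apply2 (x y z : ℕ) : Texp x y z 2 = z := by
  simp [Texp, Finsupp.single_apply]

lemma Texp_le {x₁ y₁ z₁ x₂ y₂ z₂ : ℕ} (h1 : x₁ ≤ x₂) (h2 : y₁ ≤ y₂) (h3 : z₁ ≤ z₂) :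
    Texp x₁ y₁ z₁ ≤ Texp x₂ y₂ z₂ := by
  rw [Finsupp.le_def]
  intro i
  fin_cases i <;> simpa

lemma Texp_add0 (x y z : ℕ) : Texp x y z + Finsupp.single 0 1 = Texp (x+1) y z := by
  ext i; fin_cases i <;> simp [Finsupp.single_apply]
lemma Texp_add1 (x y z : ℕ) : Texp x y z + Finsupp.single 1 1 = Texp x (y+1) z := by
  ext i; fin_cases i <;> simp [Finsupp.single_apply]
lemma Texp_add2 (x y z : ℕ) : Texp x y z + Finsupp.single 2 1 = Texp x y (z+1) := by
  ext i; fin_cases i <;> simp [Finsupp.single_apply]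

lemma Texp_degree (x y z : ℕ) : (Texp x y z).degree = x + y + z := by
  simp [Texp, degree_add3, degree_single3]



set_option maxHeartbeats 1000000 in
/-- Let `I = I₁ + I₂ ⊆ K[x₁,x₂,x₃]` be an equigenerated monomial ideal of
degree `d` as in the Setting (t = 2). If `reg I = d`, then `c₂ - c₁ = 1`. -/
theorem stmt_6 {K : Type*} [Field K] (d c₁ c₂ : ℕ) (hc : c₁ < c₂)
    (ℓ₁ ℓ₂ : ℕ) (hℓ₁ : 1 ≤ ℓ₁) (hℓ₂ : 1 ≤ ℓ₂)
    (a₁ b₁ : Fin ℓ₁ → ℕ) (a₂ b₂ : Fin ℓ₂ → ℕ)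
    (ha₁ : StrictMono a₁) (ha₂ : StrictMono a₂)
    (hd₁ : ∀ j, a₁ j + b₁ j + c₁ = d) (hd₂ : ∀ j, a₂ j + b₂ j + c₂ = d)
    (I : Ideal (MvPolynomial (Fin 3) K))
    (hI : I = Ideal.span
      ((Set.range fun j => (X 0 ^ (a₁ j) * X 1 ^ (b₁ j) * X 2 ^ c₁ :
          MvPolynomial (Fin 3) K)) ∪
       (Set.range fun j => (X 0 ^ (a₂ j) * X 1 ^ (b₂ j) * X 2 ^ c₂ :
          MvPolynomial (Fin 3) K))))
    (hreg : reg I = d) :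
    c₂ - c₁ = 1 := by
  classical
  by_contra hcc
  have hc2 : c₁ + 2 ≤ c₂ := by omega
  -- the ideal as a span of monomials
  set AA : Set (Fin 3 →₀ ℕ) :=
    (Set.range fun j => Texp (a₁ j) (b₁ j) c₁) ∪
      (Set.range fun j => Texp (a₂ j) (b₂ j) c₂) with hAA
  have hgen : ∀ (x y z : ℕ),
      (X 0 ^ x * X 1 ^ y * X 2 ^ z : MvPolynomial (Fin 3) K)
        = monomial (Texp x y z) 1 := by
    intro x y z
    rw [X_pow_eq_monomial, X_pow_eq_monomial, X_pow_eq_monomial,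
      monomial_mul, monomial_mul, one_mul, one_mul]
    rfl
  have hIA : I = Ideal.span ((fun e => monomial e (1:K)) '' AA) := by
    rw [hI]
    congr 1
    rw [hAA, Set.image_union, ← Set.range_comp, ← Set.range_comp]
    congr 1
    · exact congrArg Set.range (funext fun j => hgen _ _ _)
    · exact congrArg Set.range (funext fun j => hgen _ _ _)
  -- membership criteria
  have hmem₁ : ∀ (m : Fin ℓ₁) (x y z : ℕ), a₁ m ≤ x → b₁ m ≤ y → c₁ ≤ z →
      monomial (Texp x y z) (1:K) ∈ I := by
    intro m x y z h1 h2 h3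
    rw [hIA]
    exact mono_mem_span (Or.inl ⟨m, rfl⟩) (Texp_le h1 h2 h3)
  have hmem₂ : ∀ (m : Fin ℓ₂) (x y z : ℕ), a₂ m ≤ x → b₂ m ≤ y → c₂ ≤ z →
      monomial (Texp x y z) (1:K) ∈ I := by
    intro m x y z h1 h2 h3
    rw [hIA]
    exact mono_mem_span (Or.inr ⟨m, rfl⟩) (Texp_le h1 h2 h3)
  have hdiv : ∀ ρ : Fin 3 →₀ ℕ, monomial ρ (1:K) ∈ I →
      (∃ m : Fin ℓ₁, a₁ m ≤ ρ 0 ∧ b₁ m ≤ ρ 1 ∧ c₁ ≤ ρ 2) ∨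
      (∃ m : Fin ℓ₂, a₂ m ≤ ρ 0 ∧ b₂ m ≤ ρ 1 ∧ c₂ ≤ ρ 2) := by
    intro ρ hρ
    rw [hIA] at hρ
    obtain ⟨e, he, hle⟩ := span_mono_coeff hρ ρ (by simp [coeff_monomial])
    rw [Finsupp.le_def] at hle
    rcases he with ⟨m, rfl⟩ | ⟨m, rfl⟩
    · exact Or.inl ⟨m, by simpa using hle 0, by simpa using hle 1, by simpa using hle 2⟩
    · exact Or.inr ⟨m, by simpa using hle 0, by simpa using hle 1, by simpa using hle 2⟩
  -- coordinates from the ρ-equation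
  have hcoord : ∀ (ρ : Fin 3 →₀ ℕ) (jj : Fin 3) (x y z : ℕ),
      ρ + Finsupp.single jj 1 = Texp x y z →
      (ρ 0 + if jj = 0 then 1 else 0) = x ∧ (ρ 1 + if jj = 1 then 1 else 0) = y ∧
        (ρ 2 + if jj = 2 then 1 else 0) = z := by
    intro ρ jj x y z h
    refine ⟨?_, ?_, ?_⟩
    · have := DFunLike.congr_fun h 0
      simpa [Finsupp.add_apply, Finsupp.single_apply] using this
    · have := DFunLike.congr_fun h 1
      simpa [Finsupp.add_apply, Finsupp.single_apply] using this
    · have := DFunLike.congr_fun h 2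
      simpa [Finsupp.add_apply, Finsupp.single_apply] using this
  -- conclusion from a high Betti number
  have hfin : ∀ q : ℕ, d + 2 ≤ q → BettiNonzero I 1 q → False := by
    intro q hq hB
    have hreg' : sSup {r : ℕ | ∃ p q' : ℕ, BettiNonzero I p q' ∧ q' - p = r} = d := hreg
    have hrS : q - 1 ∈ {r : ℕ | ∃ p q' : ℕ, BettiNonzero I p q' ∧ q' - p = r} :=
      ⟨1, q, hB, rfl⟩
    have hd1 : 1 ≤ d := by have := hd₂ ⟨0, hℓ₂⟩; omega
    by_cases hbdd : BddAbove {r : ℕ | ∃ p q' : ℕ, BettiNonzero I p q' ∧ q' - p = r}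
    · have := le_csSup hbdd hrS
      omega
    · rw [csSup_of_not_bddAbove hbdd, csSup_empty] at hreg'
      simp at hreg'
      omega
  -- minimal pair
  obtain ⟨jk, -, hmin⟩ := Finset.exists_min_image (Finset.univ : Finset (Fin ℓ₁ × Fin ℓ₂))
    (fun p => max (a₁ p.1) (a₂ p.2) + max (b₁ p.1) (b₂ p.2))
    ⟨(⟨0, hℓ₁⟩, ⟨0, hℓ₂⟩), Finset.mem_univ _⟩
  obtain ⟨j0, k0⟩ := jk
  have hmin' : ∀ (m₁ : Fin ℓ₁) (m₂ : Fin ℓ₂),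
      max (a₁ j0) (a₂ k0) + max (b₁ j0) (b₂ k0)
        ≤ max (a₁ m₁) (a₂ m₂) + max (b₁ m₁) (b₂ m₂) :=
    fun m₁ m₂ => hmin (m₁, m₂) (Finset.mem_univ _)
  have hdj := hd₁ j0
  have hdk := hd₂ k0
  rcases lt_or_ge (a₁ j0) (a₂ k0) with hB1 | hA0
  · -- Case B1 : a < a', test index 1
    have hb' : b₂ k0 < b₁ j0 := by omega
    refine hfin (a₂ k0 + b₁ j0 + c₂) (by omega) ?_
    refine betti_witness hIA 2 1 (by decide)
      (Texp (a₂ k0) (b₁ j0) (c₂ - 1)) (Texp (a₂ k0) (b₁ j0 - 1) c₂) ?_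
      (hmem₁ j0 _ _ _ (le_of_lt hB1) le_rfl (by omega))
      (hmem₂ k0 _ _ _ le_rfl (by omega) le_rfl) ?_ _ ?_
    · rw [Texp_add2, Texp_add1, Nat.sub_add_cancel (by omega), Nat.sub_add_cancel (by omega)]
    · intro jj hjj ρ hρ hmemρ
      obtain ⟨e0, e1, e2⟩ := hcoord ρ jj _ _ _ hρ
      rcases hdiv ρ hmemρ with ⟨m, hm0, hm1, hm2⟩ | ⟨m, hm0, hm1, hm2⟩
      · have h1 := hmin' m k0
        have h2 := hd₁ m
        fin_cases jj <;> simp [Fin.ext_iff] at e0 e1 e2 hjj ⊢ <;> omega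
      · have h1 := hmin' j0 m
        have h2 := hd₂ m
        fin_cases jj <;> simp [Fin.ext_iff] at e0 e1 e2 hjj ⊢ <;> omega
    · rw [Texp_degree]
      omega
  rcases lt_or_ge (b₁ j0) (b₂ k0) with hB2 | hA1
  · -- Case B2 : b < b', test index 0
    have ha' : a₂ k0 < a₁ j0 := by omega
    refine hfin (a₁ j0 + b₂ k0 + c₂) (by omega) ?_
    refine betti_witness hIA 2 0 (by decide)
      (Texp (a₁ j0) (b₂ k0) (c₂ - 1)) (Texp (a₁ j0 - 1) (b₂ k0) c₂) ?_
      (hmem₁ j0 _ _ _ le_rfl (le_of_lt hB2) (by omega))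
      (hmem₂ k0 _ _ _ (by omega) le_rfl le_rfl) ?_ _ ?_
    · rw [Texp_add2, Texp_add0, Nat.sub_add_cancel (by omega), Nat.sub_add_cancel (by omega)]
    · intro jj hjj ρ hρ hmemρ
      obtain ⟨e0, e1, e2⟩ := hcoord ρ jj _ _ _ hρ
      rcases hdiv ρ hmemρ with ⟨m, hm0, hm1, hm2⟩ | ⟨m, hm0, hm1, hm2⟩
      · have h1 := hmin' m k0
        have h2 := hd₁ m
        fin_cases jj <;> simp [Fin.ext_iff] at e0 e1 e2 hjj ⊢ <;> omega
      · have h1 := hmin' j0 m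
        have h2 := hd₂ m
        fin_cases jj <;> simp [Fin.ext_iff] at e0 e1 e2 hjj ⊢ <;> omega
    · rw [Texp_degree]
      omega
  -- Case A : a' ≤ a and b' ≤ b, test index 2
  · refine hfin (a₁ j0 + b₁ j0 + c₂) (by omega) ?_
    have htA : ∀ jj : Fin 3, jj ≠ 2 → ∀ ρ : Fin 3 →₀ ℕ,
        ρ + Finsupp.single jj 1 = Texp (a₁ j0) (b₁ j0) (c₂ - 1) →
        monomial ρ (1:K) ∉ I := by
      intro jj hjj ρ hρ hmemρ
      obtain ⟨e0, e1, e2⟩ := hcoord ρ jj _ _ _ hρ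
      rcases hdiv ρ hmemρ with ⟨m, hm0, hm1, hm2⟩ | ⟨m, hm0, hm1, hm2⟩
      · have h2 := hd₁ m
        fin_cases jj <;> simp [Fin.ext_iff] at e0 e1 e2 hjj ⊢ <;> omega
      · have h2 := hd₂ m
        fin_cases jj <;> simp [Fin.ext_iff] at e0 e1 e2 hjj ⊢ <;> omega
    rcases lt_or_ge (a₂ k0) (a₁ j0) with ha' | ha''
    · refine betti_witness hIA 0 2 (by decide)
        (Texp (a₁ j0 - 1) (b₁ j0) c₂) (Texp (a₁ j0) (b₁ j0) (c₂ - 1)) ?_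
        (hmem₂ k0 _ _ _ (by omega) hA1 le_rfl)
        (hmem₁ j0 _ _ _ le_rfl le_rfl (by omega)) htA _ ?_
      · rw [Texp_add0, Texp_add2, Nat.sub_add_cancel (by omega), Nat.sub_add_cancel (by omega)]
      · rw [Texp_degree]
        omega
    · have hb' : b₂ k0 < b₁ j0 := by omega
      refine betti_witness hIA 1 2 (by decide)
        (Texp (a₁ j0) (b₁ j0 - 1) c₂) (Texp (a₁ j0) (b₁ j0) (c₂ - 1)) ?_
        (hmem₂ k0 _ _ _ hA0 (by omega) le_rfl)
        (hmem₁ j0 _ _ _ le_rfl le_rfl (by omega)) htA _ ?_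
      · ext i
        fin_cases i <;>
          simp [Texp, Finsupp.add_apply, Finsupp.single_apply] <;> omega
      · rw [Texp_degree]
        omega
end

section
/- Let I = Σ_{i=1}^t I_i ⊆ S = K[x_1, x_2, x_3] be an equigenerated monomial ideal of degree d as in the Setting, with t ≥ 3. Suppose there exists k ∈ {2, …, t} with ℓ_k ≥ 2 and a_{k(j+1)} − a_{kj} ≥ 2 for some j ∈ {1, …, ℓ_k − 1}, and suppose reg(I) = d. Then there exist m_k, n_k ∈ {1, …, ℓ_{k−1}} such that a_{(k−1)m_k} = a_{k(j+1)} and b_{(k−1)n_k} = b_{kj}. -/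
open MvPolynomial

namespace Stmt9Aux

noncomputable def vec (p q r : ℕ) : Fin 3 →₀ ℕ := Finsupp.equivFunOnFinite.symm ![p, q, r]

@[simp] lemma vec_apply (p q r : ℕ) (i : Fin 3) : vec p q r i = ![p,q,r] i := rfl

lemma vec_degree (p q r : ℕ) : (vec p q r).degree = p + q + r := by
  rw [Finsupp.degree_apply, Finset.sum_subset (Finset.subset_univ _)
    (by intro x _ hx; exact Finsupp.notMem_support_iff.mp hx), Fin.sum_univ_three]
  rfl

lemma vec_le_vec {p q r p' q' r' : ℕ} : vec p q r ≤ vec p' q' r' ↔ p ≤ p' ∧ q ≤ q' ∧ r ≤ r' := by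
  rw [Finsupp.le_def]
  constructor
  · intro h; exact ⟨h 0, h 1, h 2⟩
  · rintro ⟨h0, h1, h2⟩ i; fin_cases i <;> simpa

lemma vec_add_single0 (p q r : ℕ) : Finsupp.single (0 : Fin 3) 1 + vec p q r = vec (p+1) q r := by
  ext i; fin_cases i <;> simp [Finsupp.single_apply] <;> omega
lemma vec_add_single1 (p q r : ℕ) : Finsupp.single (1 : Fin 3) 1 + vec p q r = vec p (q+1) r := by
  ext i; fin_cases i <;> simp [Finsupp.single_apply] <;> omega
lemma vec_add_single2 (p q r : ℕ) : Finsupp.single (2 : Fin 3) 1 + vec p q r = vec p q (r+1) := by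
  ext i; fin_cases i <;> simp [Finsupp.single_apply] <;> omega

variable {K : Type*} [Field K]

lemma X_mul_mono (i : Fin 3) (m : Fin 3 →₀ ℕ) :
    (X i : MvPolynomial (Fin 3) K) * monomial m 1 = monomial (Finsupp.single i 1 + m) 1 := by
  rw [X, monomial_mul, one_mul]

lemma prod_eq_mono (p q r : ℕ) :
    (X 0 ^ p * X 1 ^ q * X 2 ^ r : MvPolynomial (Fin 3) K) = monomial (vec p q r) 1 := by
  rw [X_pow_eq_monomial, X_pow_eq_monomial, X_pow_eq_monomial, monomial_mul, monomial_mul]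
  norm_num
  ext i; fin_cases i <;> simp [Finsupp.single_apply]

variable {I : Ideal (MvPolynomial (Fin 3) K)}

lemma koszulD_at0 (g : KoszulTerm I 2) :
    ((koszulD g ⟨{0}, by decide⟩ : I) : MvPolynomial (Fin 3) K)
      = -(X 1 * ((g ⟨{0,1}, by decide⟩ : I) : MvPolynomial (Fin 3) K))
        - X 2 * ((g ⟨{0,2}, by decide⟩ : I) : MvPolynomial (Fin 3) K) := by
  have e1 : g ⟨insert 1 ({0} : Finset (Fin 3)), by decide⟩ = g ⟨{0,1}, by decide⟩ :=
    congrArg g (Subtype.ext (by decide))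
  have e2 : g ⟨insert 2 ({0} : Finset (Fin 3)), by decide⟩ = g ⟨{0,2}, by decide⟩ :=
    congrArg g (Subtype.ext (by decide))
  show ((∑ j : Fin 3, _ : I) : MvPolynomial (Fin 3) K) = _
  rw [Fin.sum_univ_three]
  rw [dif_pos (by decide : (0:Fin 3) ∈ ({0}:Finset (Fin 3)))]
  rw [dif_neg (by decide : ¬(1:Fin 3) ∈ ({0}:Finset (Fin 3)))]
  rw [dif_neg (by decide : ¬(2:Fin 3) ∈ ({0}:Finset (Fin 3)))]
  rw [e1, e2]
  have c1 : ((({0}:Finset (Fin 3)).filter (fun i => i < 1)).card) = 1 := by decide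
  have c2 : ((({0}:Finset (Fin 3)).filter (fun i => i < 2)).card) = 1 := by decide
  rw [c1, c2]
  push_cast [Submodule.coe_smul_of_tower]
  simp only [zero_add, neg_smul, one_smul, smul_eq_mul]
  ring

lemma koszulD_at1 (g : KoszulTerm I 2) :
    ((koszulD g ⟨{1}, by decide⟩ : I) : MvPolynomial (Fin 3) K)
      = X 0 * ((g ⟨{0,1}, by decide⟩ : I) : MvPolynomial (Fin 3) K)
        - X 2 * ((g ⟨{1,2}, by decide⟩ : I) : MvPolynomial (Fin 3) K) := by
  have e1 : g ⟨insert 0 ({1} : Finset (Fin 3)), by decide⟩ = g ⟨{0,1}, by decide⟩ :=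
    congrArg g (Subtype.ext (by decide))
  have e2 : g ⟨insert 2 ({1} : Finset (Fin 3)), by decide⟩ = g ⟨{1,2}, by decide⟩ :=
    congrArg g (Subtype.ext (by decide))
  show ((∑ j : Fin 3, _ : I) : MvPolynomial (Fin 3) K) = _
  rw [Fin.sum_univ_three]
  rw [dif_neg (by decide : ¬(0:Fin 3) ∈ ({1}:Finset (Fin 3)))]
  rw [dif_pos (by decide : (1:Fin 3) ∈ ({1}:Finset (Fin 3)))]
  rw [dif_neg (by decide : ¬(2:Fin 3) ∈ ({1}:Finset (Fin 3)))]
  rw [e1, e2]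
  have c1 : ((({1}:Finset (Fin 3)).filter (fun i => i < 0)).card) = 0 := by decide
  have c2 : ((({1}:Finset (Fin 3)).filter (fun i => i < 2)).card) = 1 := by decide
  rw [c1, c2]
  push_cast [Submodule.coe_smul_of_tower]
  simp only [add_zero, zero_add, neg_smul, one_smul, smul_eq_mul]
  ring

lemma boundary_eqs {F : KoszulTerm I 1} (hb : IsKoszulBoundary F) :
    ∃ P01 P02 P12 : MvPolynomial (Fin 3) K, P01 ∈ I ∧ P02 ∈ I ∧ P12 ∈ I ∧
      ((F ⟨{0}, by decide⟩ : I) : MvPolynomial (Fin 3) K) = -(X 1 * P01) - X 2 * P02 ∧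
      ((F ⟨{1}, by decide⟩ : I) : MvPolynomial (Fin 3) K) = X 0 * P01 - X 2 * P12 := by
  obtain ⟨g, hg⟩ := hb
  refine ⟨g ⟨{0,1}, by decide⟩, g ⟨{0,2}, by decide⟩, g ⟨{1,2}, by decide⟩,
    (g _).2, (g _).2, (g _).2, ?_, ?_⟩
  · rw [← hg]; exact koszulD_at0 g
  · rw [← hg]; exact koszulD_at1 g

lemma cycle_of (F : KoszulTerm I 1)
    (h : X 0 * ((F ⟨{0}, by decide⟩ : I) : MvPolynomial (Fin 3) K)
      + X 1 * ((F ⟨{1}, by decide⟩ : I) : MvPolynomial (Fin 3) K)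
      + X 2 * ((F ⟨{2}, by decide⟩ : I) : MvPolynomial (Fin 3) K) = 0) :
    IsKoszulCycle F := by
  show koszulD F = 0
  funext s
  have hs : s = ⟨(∅ : Finset (Fin 3)), rfl⟩ := Subtype.ext (Finset.card_eq_zero.mp s.2)
  rw [hs]
  have e0 : F ⟨insert 0 (∅ : Finset (Fin 3)), by decide⟩ = F ⟨{0}, by decide⟩ :=
    congrArg F (Subtype.ext (by decide))
  have e1 : F ⟨insert 1 (∅ : Finset (Fin 3)), by decide⟩ = F ⟨{1}, by decide⟩ :=
    congrArg F (Subtype.ext (by decide))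
  have e2 : F ⟨insert 2 (∅ : Finset (Fin 3)), by decide⟩ = F ⟨{2}, by decide⟩ :=
    congrArg F (Subtype.ext (by decide))
  apply Subtype.coe_injective
  show ((∑ j : Fin 3, _ : I) : MvPolynomial (Fin 3) K) = _
  rw [Fin.sum_univ_three]
  rw [dif_neg (by decide : ¬(0:Fin 3) ∈ (∅:Finset (Fin 3)))]
  rw [dif_neg (by decide : ¬(1:Fin 3) ∈ (∅:Finset (Fin 3)))]
  rw [dif_neg (by decide : ¬(2:Fin 3) ∈ (∅:Finset (Fin 3)))]
  rw [e0, e1, e2]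
  have c0 : (((∅:Finset (Fin 3)).filter (fun i => i < 0)).card) = 0 := by decide
  have c1 : (((∅:Finset (Fin 3)).filter (fun i => i < 1)).card) = 0 := by decide
  have c2 : (((∅:Finset (Fin 3)).filter (fun i => i < 2)).card) = 0 := by decide
  rw [c0, c1, c2]
  push_cast [Submodule.coe_smul_of_tower]
  simp only [pow_zero, one_smul, smul_eq_mul]
  simp only [Pi.zero_apply, ZeroMemClass.coe_zero]
  exact h

lemma reg_bound {d : ℕ} (hreg : reg I = d) (hd : 1 ≤ d) {p q : ℕ}
    (hB : BettiNonzero I p q) : q - p ≤ d := by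
  by_cases hbdd : BddAbove { r : ℕ | ∃ p q : ℕ, BettiNonzero I p q ∧ q - p = r }
  · have := le_csSup hbdd (Set.mem_setOf.mpr ⟨p, q, hB, rfl⟩)
    rw [show sSup { r : ℕ | ∃ p q : ℕ, BettiNonzero I p q ∧ q - p = r } = reg I from rfl,
      hreg] at this
    exact this
  · exfalso
    have h0 : reg I = 0 := by
      rw [show reg I = sSup { r : ℕ | ∃ p q : ℕ, BettiNonzero I p q ∧ q - p = r } from rfl,
        csSup_of_not_bddAbove hbdd, csSup_empty]
      rfl
    omega

end Stmt9Aux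
namespace Stmt9Aux
variable {K : Type*} [Field K] {I : Ideal (MvPolynomial (Fin 3) K)}

lemma mem_of_support {A : Set (Fin 3 →₀ ℕ)}
    (hIA : I = Ideal.span ((fun e => monomial e (1:K)) '' A))
    {f : MvPolynomial (Fin 3) K} (hf : f ∈ I) {e : Fin 3 →₀ ℕ} (he : coeff e f ≠ 0) :
    monomial e (1:K) ∈ I := by
  rw [hIA, mem_ideal_span_monomial_image] at hf ⊢
  intro xi hxi
  have hc := mem_support_iff.mp hxi
  rw [coeff_monomial] at hc
  by_cases hex : e = xi
  · subst hex; exact hf e (mem_support_iff.mpr he)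
  · rw [if_neg hex] at hc; exact absurd rfl hc

lemma conn01 {A : Set (Fin 3 →₀ ℕ)}
    (hIA : I = Ideal.span ((fun e => monomial e (1:K)) '' A))
    {d : ℕ} (hreg : reg I = d) (hd : 1 ≤ d) (p q r : ℕ) (hdeg : d + 2 ≤ p + q + r + 3)
    (h0 : monomial (vec p (q+1) (r+1)) (1:K) ∈ I)
    (h1 : monomial (vec (p+1) q (r+1)) (1:K) ∈ I) :
    monomial (vec p q (r+1)) (1:K) ∈ I ∨
      (monomial (vec p (q+1) r) (1:K) ∈ I ∧ monomial (vec (p+1) q r) (1:K) ∈ I) := by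
  by_contra hcon
  have hn1 : monomial (vec p q (r+1)) (1:K) ∉ I := fun h => hcon (Or.inl h)
  have hn2 : ¬(monomial (vec p (q+1) r) (1:K) ∈ I ∧ monomial (vec (p+1) q r) (1:K) ∈ I) :=
    fun h => hcon (Or.inr h)
  set F : KoszulTerm I 1 := fun s =>
    if s.val = {0} then ⟨monomial (vec p (q+1) (r+1)) 1, h0⟩
    else if s.val = {1} then -⟨monomial (vec (p+1) q (r+1)) 1, h1⟩ else 0 with hF
  have hF0 : ((F ⟨{0}, by decide⟩ : I) : MvPolynomial (Fin 3) K)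
      = monomial (vec p (q+1) (r+1)) 1 := by
    rw [hF]; exact congrArg _ (if_pos rfl)
  have hF1 : ((F ⟨{1}, by decide⟩ : I) : MvPolynomial (Fin 3) K)
      = -(monomial (vec (p+1) q (r+1)) 1) := by
    rw [hF]; exact congrArg _ ((if_neg (by decide)).trans (if_pos rfl))
  have hF2 : ((F ⟨{2}, by decide⟩ : I) : MvPolynomial (Fin 3) K) = 0 := by
    rw [hF]; exact congrArg _ ((if_neg (by decide)).trans (if_neg (by decide)))
  have hcyc : IsKoszulCycle F := by
    apply cycle_of
    rw [hF0, hF1, hF2]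
    rw [mul_neg, X_mul_mono, X_mul_mono, vec_add_single0, vec_add_single1]
    ring
  have hnb : ¬ IsKoszulBoundary F := by
    intro hb
    obtain ⟨P01, P02, P12, hP01, hP02, hP12, hq0, hq1⟩ := boundary_eqs hb
    rw [hF0] at hq0
    rw [hF1] at hq1
    have cA : coeff (vec p q (r+1)) P01 = 0 := by
      by_contra hc; exact hn1 (mem_of_support hIA hP01 hc)
    have d1 : coeff (vec p (q+1) (r+1)) (X 1 * P01) = coeff (vec p q (r+1)) P01 := by
      rw [← vec_add_single1]; exact coeff_X_mul _ _ _
    have d2 : coeff (vec p (q+1) (r+1)) (X 2 * P02) = coeff (vec p (q+1) r) P02 := by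
      rw [← vec_add_single2]; exact coeff_X_mul _ _ _
    have d3 : coeff (vec (p+1) q (r+1)) (X 0 * P01) = coeff (vec p q (r+1)) P01 := by
      rw [← vec_add_single0]; exact coeff_X_mul _ _ _
    have d4 : coeff (vec (p+1) q (r+1)) (X 2 * P12) = coeff (vec (p+1) q r) P12 := by
      rw [← vec_add_single2]; exact coeff_X_mul _ _ _
    have e0 := congrArg (coeff (vec p (q+1) (r+1))) hq0
    rw [coeff_monomial, if_pos rfl, coeff_sub, coeff_neg, d1, d2, cA] at e0
    have e1 := congrArg (coeff (vec (p+1) q (r+1))) hq1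
    rw [coeff_neg, coeff_monomial, if_pos rfl, coeff_sub, d3, d4, cA] at e1
    have hb02 : coeff (vec p (q+1) r) P02 = -1 := by linear_combination e0
    have hb12 : coeff (vec (p+1) q r) P12 = 1 := by linear_combination e1
    exact hn2 ⟨mem_of_support hIA hP02 (by rw [hb02]; exact neg_ne_zero.mpr one_ne_zero),
      mem_of_support hIA hP12 (by rw [hb12]; exact one_ne_zero)⟩
  have hhom : ∀ s : {s : Finset (Fin 3) // s.card = 1},
      IsHomogeneous ((F s : MvPolynomial (Fin 3) K)) ((p+q+r+3) - 1) := by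
    intro s
    have hdeg1 : (p+q+r+3) - 1 = p+q+r+2 := by omega
    rw [hdeg1]
    by_cases e0 : s.val = {0}
    · rw [show s = ⟨{0}, by decide⟩ from Subtype.ext e0, hF0]
      exact isHomogeneous_monomial _ (by rw [vec_degree]; omega)
    by_cases e1 : s.val = {1}
    · rw [show s = ⟨{1}, by decide⟩ from Subtype.ext e1, hF1]
      exact (isHomogeneous_monomial _ (by rw [vec_degree]; omega)).neg
    · have hz : ((F s : I) : MvPolynomial (Fin 3) K) = 0 := by
        rw [hF]; exact congrArg _ ((if_neg e0).trans (if_neg e1))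
      rw [hz]
      exact isHomogeneous_zero _ _ _
  have hB : BettiNonzero I 1 (p+q+r+3) := ⟨F, hcyc, hnb, hhom⟩
  have := reg_bound hreg hd hB
  omega

end Stmt9Aux
namespace Stmt9Aux
variable {K : Type*} [Field K] {I : Ideal (MvPolynomial (Fin 3) K)}

lemma conn02 {A : Set (Fin 3 →₀ ℕ)}
    (hIA : I = Ideal.span ((fun e => monomial e (1:K)) '' A))
    {d : ℕ} (hreg : reg I = d) (hd : 1 ≤ d) (p q r : ℕ) (hdeg : d + 2 ≤ p + q + r + 3)
    (h0 : monomial (vec p (q+1) (r+1)) (1:K) ∈ I)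
    (h2 : monomial (vec (p+1) (q+1) r) (1:K) ∈ I) :
    monomial (vec p (q+1) r) (1:K) ∈ I ∨
      (monomial (vec p q (r+1)) (1:K) ∈ I ∧ monomial (vec (p+1) q r) (1:K) ∈ I) := by
  by_contra hcon
  have hn1 : monomial (vec p (q+1) r) (1:K) ∉ I := fun h => hcon (Or.inl h)
  have hn2 : ¬(monomial (vec p q (r+1)) (1:K) ∈ I ∧ monomial (vec (p+1) q r) (1:K) ∈ I) :=
    fun h => hcon (Or.inr h)
  set F : KoszulTerm I 1 := fun s =>
    if s.val = {0} then ⟨monomial (vec p (q+1) (r+1)) 1, h0⟩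
    else if s.val = {2} then -⟨monomial (vec (p+1) (q+1) r) 1, h2⟩ else 0 with hF
  have hF0 : ((F ⟨{0}, by decide⟩ : I) : MvPolynomial (Fin 3) K)
      = monomial (vec p (q+1) (r+1)) 1 := by
    rw [hF]; exact congrArg _ (if_pos rfl)
  have hF2 : ((F ⟨{2}, by decide⟩ : I) : MvPolynomial (Fin 3) K)
      = -(monomial (vec (p+1) (q+1) r) 1) := by
    rw [hF]; exact congrArg _ ((if_neg (by decide)).trans (if_pos rfl))
  have hF1 : ((F ⟨{1}, by decide⟩ : I) : MvPolynomial (Fin 3) K) = 0 := by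
    rw [hF]; exact congrArg _ ((if_neg (by decide)).trans (if_neg (by decide)))
  have hcyc : IsKoszulCycle F := by
    apply cycle_of
    rw [hF0, hF1, hF2]
    rw [mul_neg, X_mul_mono, X_mul_mono, vec_add_single0, vec_add_single2]
    ring
  have hnb : ¬ IsKoszulBoundary F := by
    intro hb
    obtain ⟨P01, P02, P12, hP01, hP02, hP12, hq0, hq1⟩ := boundary_eqs hb
    rw [hF0] at hq0
    rw [hF1] at hq1
    have cA : coeff (vec p (q+1) r) P02 = 0 := by
      by_contra hc; exact hn1 (mem_of_support hIA hP02 hc)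
    have d1 : coeff (vec p (q+1) (r+1)) (X 1 * P01) = coeff (vec p q (r+1)) P01 := by
      rw [← vec_add_single1]; exact coeff_X_mul _ _ _
    have d2 : coeff (vec p (q+1) (r+1)) (X 2 * P02) = coeff (vec p (q+1) r) P02 := by
      rw [← vec_add_single2]; exact coeff_X_mul _ _ _
    have d3 : coeff (vec (p+1) q (r+1)) (X 0 * P01) = coeff (vec p q (r+1)) P01 := by
      rw [← vec_add_single0]; exact coeff_X_mul _ _ _
    have d4 : coeff (vec (p+1) q (r+1)) (X 2 * P12) = coeff (vec (p+1) q r) P12 := by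
      rw [← vec_add_single2]; exact coeff_X_mul _ _ _
    have e0 := congrArg (coeff (vec p (q+1) (r+1))) hq0
    rw [coeff_monomial, if_pos rfl, coeff_sub, coeff_neg, d1, d2, cA] at e0
    have e1 := congrArg (coeff (vec (p+1) q (r+1))) hq1
    rw [coeff_zero, coeff_sub, d3, d4] at e1
    have hb01 : coeff (vec p q (r+1)) P01 = -1 := by linear_combination e0
    have hb12 : coeff (vec (p+1) q r) P12 = -1 := by linear_combination e1 + hb01
    exact hn2 ⟨mem_of_support hIA hP01 (by rw [hb01]; exact neg_ne_zero.mpr one_ne_zero),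
      mem_of_support hIA hP12 (by rw [hb12]; exact neg_ne_zero.mpr one_ne_zero)⟩
  have hhom : ∀ s : {s : Finset (Fin 3) // s.card = 1},
      IsHomogeneous ((F s : MvPolynomial (Fin 3) K)) ((p+q+r+3) - 1) := by
    intro s
    have hdeg1 : (p+q+r+3) - 1 = p+q+r+2 := by omega
    rw [hdeg1]
    by_cases e0 : s.val = {0}
    · rw [show s = ⟨{0}, by decide⟩ from Subtype.ext e0, hF0]
      exact isHomogeneous_monomial _ (by rw [vec_degree]; omega)
    by_cases e2 : s.val = {2}
    · rw [show s = ⟨{2}, by decide⟩ from Subtype.ext e2, hF2]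
      exact (isHomogeneous_monomial _ (by rw [vec_degree]; omega)).neg
    · have hz : ((F s : I) : MvPolynomial (Fin 3) K) = 0 := by
        rw [hF]; exact congrArg _ ((if_neg e0).trans (if_neg e2))
      rw [hz]
      exact isHomogeneous_zero _ _ _
  have hB : BettiNonzero I 1 (p+q+r+3) := ⟨F, hcyc, hnb, hhom⟩
  have := reg_bound hreg hd hB
  omega

lemma conn12 {A : Set (Fin 3 →₀ ℕ)}
    (hIA : I = Ideal.span ((fun e => monomial e (1:K)) '' A))
    {d : ℕ} (hreg : reg I = d) (hd : 1 ≤ d) (p q r : ℕ) (hdeg : d + 2 ≤ p + q + r + 3)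
    (h1 : monomial (vec (p+1) q (r+1)) (1:K) ∈ I)
    (h2 : monomial (vec (p+1) (q+1) r) (1:K) ∈ I) :
    monomial (vec (p+1) q r) (1:K) ∈ I ∨
      (monomial (vec p q (r+1)) (1:K) ∈ I ∧ monomial (vec p (q+1) r) (1:K) ∈ I) := by
  by_contra hcon
  have hn1 : monomial (vec (p+1) q r) (1:K) ∉ I := fun h => hcon (Or.inl h)
  have hn2 : ¬(monomial (vec p q (r+1)) (1:K) ∈ I ∧ monomial (vec p (q+1) r) (1:K) ∈ I) :=
    fun h => hcon (Or.inr h)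
  set F : KoszulTerm I 1 := fun s =>
    if s.val = {1} then ⟨monomial (vec (p+1) q (r+1)) 1, h1⟩
    else if s.val = {2} then -⟨monomial (vec (p+1) (q+1) r) 1, h2⟩ else 0 with hF
  have hF1 : ((F ⟨{1}, by decide⟩ : I) : MvPolynomial (Fin 3) K)
      = monomial (vec (p+1) q (r+1)) 1 := by
    rw [hF]; exact congrArg _ (if_pos rfl)
  have hF2 : ((F ⟨{2}, by decide⟩ : I) : MvPolynomial (Fin 3) K)
      = -(monomial (vec (p+1) (q+1) r) 1) := by
    rw [hF]; exact congrArg _ ((if_neg (by decide)).trans (if_pos rfl))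
  have hF0 : ((F ⟨{0}, by decide⟩ : I) : MvPolynomial (Fin 3) K) = 0 := by
    rw [hF]; exact congrArg _ ((if_neg (by decide)).trans (if_neg (by decide)))
  have hcyc : IsKoszulCycle F := by
    apply cycle_of
    rw [hF0, hF1, hF2]
    rw [mul_neg, X_mul_mono, X_mul_mono, vec_add_single1, vec_add_single2]
    ring
  have hnb : ¬ IsKoszulBoundary F := by
    intro hb
    obtain ⟨P01, P02, P12, hP01, hP02, hP12, hq0, hq1⟩ := boundary_eqs hb
    rw [hF0] at hq0
    rw [hF1] at hq1
    have cA : coeff (vec (p+1) q r) P12 = 0 := by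
      by_contra hc; exact hn1 (mem_of_support hIA hP12 hc)
    have d1 : coeff (vec p (q+1) (r+1)) (X 1 * P01) = coeff (vec p q (r+1)) P01 := by
      rw [← vec_add_single1]; exact coeff_X_mul _ _ _
    have d2 : coeff (vec p (q+1) (r+1)) (X 2 * P02) = coeff (vec p (q+1) r) P02 := by
      rw [← vec_add_single2]; exact coeff_X_mul _ _ _
    have d3 : coeff (vec (p+1) q (r+1)) (X 0 * P01) = coeff (vec p q (r+1)) P01 := by
      rw [← vec_add_single0]; exact coeff_X_mul _ _ _
    have d4 : coeff (vec (p+1) q (r+1)) (X 2 * P12) = coeff (vec (p+1) q r) P12 := by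
      rw [← vec_add_single2]; exact coeff_X_mul _ _ _
    have e0 := congrArg (coeff (vec p (q+1) (r+1))) hq0
    rw [coeff_zero, coeff_sub, coeff_neg, d1, d2] at e0
    have e1 := congrArg (coeff (vec (p+1) q (r+1))) hq1
    rw [coeff_monomial, if_pos rfl, coeff_sub, d3, d4, cA] at e1
    have hb01 : coeff (vec p q (r+1)) P01 = 1 := by linear_combination -e1
    have hb02 : coeff (vec p (q+1) r) P02 = -1 := by linear_combination e0 - hb01
    exact hn2 ⟨mem_of_support hIA hP01 (by rw [hb01]; exact one_ne_zero),
      mem_of_support hIA hP02 (by rw [hb02]; exact neg_ne_zero.mpr one_ne_zero)⟩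
  have hhom : ∀ s : {s : Finset (Fin 3) // s.card = 1},
      IsHomogeneous ((F s : MvPolynomial (Fin 3) K)) ((p+q+r+3) - 1) := by
    intro s
    have hdeg1 : (p+q+r+3) - 1 = p+q+r+2 := by omega
    rw [hdeg1]
    by_cases e1 : s.val = {1}
    · rw [show s = ⟨{1}, by decide⟩ from Subtype.ext e1, hF1]
      exact isHomogeneous_monomial _ (by rw [vec_degree]; omega)
    by_cases e2 : s.val = {2}
    · rw [show s = ⟨{2}, by decide⟩ from Subtype.ext e2, hF2]
      exact (isHomogeneous_monomial _ (by rw [vec_degree]; omega)).neg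
    · have hz : ((F s : I) : MvPolynomial (Fin 3) K) = 0 := by
        rw [hF]; exact congrArg _ ((if_neg e1).trans (if_neg e2))
      rw [hz]
      exact isHomogeneous_zero _ _ _
  have hB : BettiNonzero I 1 (p+q+r+3) := ⟨F, hcyc, hnb, hhom⟩
  have := reg_bound hreg hd hB
  omega

end Stmt9Aux
open Stmt9Aux

/-- Let `I = Σ_{i=1}^t I_i ⊆ K[x₁,x₂,x₃]` be an equigenerated monomial
ideal of degree `d` as in the Setting, `t ≥ 3`. Suppose there is a layer `k ∈ {2,…,t}`
with `ℓ_k ≥ 2` and a jump `a_{k(j+1)} - a_{kj} ≥ 2`, and `reg I = d`. Then the previous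
layer contains generators matching the `x₁`-exponent `a_{k(j+1)}` and the `x₂`-exponent
`b_{kj}`. -/
theorem stmt_9 {K : Type*} [Field K] (d t : ℕ) (ht : 3 ≤ t)
    (c : Fin t → ℕ) (hc : StrictMono c)
    (ℓ : Fin t → ℕ) (hℓ : ∀ i, 1 ≤ ℓ i)
    (a b : (i : Fin t) → Fin (ℓ i) → ℕ)
    (ha : ∀ i, StrictMono (a i))
    (hd : ∀ i j, a i j + b i j + c i = d)
    (I : Ideal (MvPolynomial (Fin 3) K))
    (hI : I = Ideal.span (Set.range fun q : (Σ i : Fin t, Fin (ℓ i)) =>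
      (X 0 ^ (a q.1 q.2) * X 1 ^ (b q.1 q.2) * X 2 ^ (c q.1) :
        MvPolynomial (Fin 3) K)))
    (k : ℕ) (hk1 : 1 ≤ k) (hkt : k < t)
    (j : ℕ) (hj : j + 1 < ℓ ⟨k, hkt⟩)
    (hjump : 2 ≤ a ⟨k, hkt⟩ ⟨j + 1, hj⟩ - a ⟨k, hkt⟩ ⟨j, by omega⟩)
    (hreg : reg I = d) :
    (∃ mk : Fin (ℓ ⟨k - 1, by omega⟩),
        a ⟨k - 1, by omega⟩ mk = a ⟨k, hkt⟩ ⟨j + 1, hj⟩) ∧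
    (∃ nk : Fin (ℓ ⟨k - 1, by omega⟩),
        b ⟨k - 1, by omega⟩ nk = b ⟨k, hkt⟩ ⟨j, by omega⟩) := by
  classical
  have hjlt : j < ℓ ⟨k, hkt⟩ := by omega
  have hk1t : k - 1 < t := by omega
  set kk : Fin t := ⟨k, hkt⟩ with hkk
  set k1 : Fin t := ⟨k - 1, hk1t⟩ with hk1d
  set jj : Fin (ℓ kk) := ⟨j, hjlt⟩ with hjjd
  set jj' : Fin (ℓ kk) := ⟨j + 1, hj⟩ with hjj'd
  have hAlt : a kk jj < a kk jj' := ha kk (by rw [Fin.lt_def]; exact Nat.lt_succ_self j)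
  have hjump2 : 2 ≤ a kk jj' - a kk jj := hjump
  have hARge : a kk jj + 2 ≤ a kk jj' := by omega
  have hdL : a kk jj + b kk jj + c kk = d := hd kk jj
  have hdR : a kk jj' + b kk jj' + c kk = d := hd kk jj'
  have hklt : k1 < kk := by rw [Fin.lt_def]; simp [hkk, hk1d]; omega
  have hClt : c k1 < c kk := hc hklt
  have hd1 : 1 ≤ d := by omega
  obtain ⟨C2, hC2⟩ : ∃ x, c kk = x + 1 := ⟨c kk - 1, by omega⟩
  obtain ⟨B2, hB2⟩ : ∃ x, b kk jj = x + 1 := ⟨b kk jj - 1, by omega⟩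
  obtain ⟨s2, hs2⟩ : ∃ x, a kk jj' = a kk jj + (x + 2) := ⟨a kk jj' - a kk jj - 2, by omega⟩
  -- the generator exponent set
  set ASet : Set (Fin 3 →₀ ℕ) :=
    Set.range (fun q : (Σ i : Fin t, Fin (ℓ i)) => vec (a q.1 q.2) (b q.1 q.2) (c q.1))
    with hASet
  have hIA : I = Ideal.span ((fun e => monomial e (1:K)) '' ASet) := by
    have hfe : (fun q : (Σ i : Fin t, Fin (ℓ i)) =>
        (X 0 ^ (a q.1 q.2) * X 1 ^ (b q.1 q.2) * X 2 ^ (c q.1) : MvPolynomial (Fin 3) K))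
        = fun q => monomial (vec (a q.1 q.2) (b q.1 q.2) (c q.1)) 1 :=
      funext fun q => prod_eq_mono _ _ _
    rw [hI, hfe, hASet, ← Set.range_comp]
    rfl
  have memIff : ∀ p q r : ℕ, monomial (vec p q r) (1:K) ∈ I ↔
      ∃ (i : Fin t) (l : Fin (ℓ i)), a i l ≤ p ∧ b i l ≤ q ∧ c i ≤ r := by
    intro p q r
    rw [hIA, mem_ideal_span_monomial_image]
    constructor
    · intro h
      obtain ⟨si, hsi, hle⟩ := h (vec p q r)
        (mem_support_iff.mpr (by rw [coeff_monomial, if_pos rfl]; exact one_ne_zero))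
      obtain ⟨⟨i, l⟩, rfl⟩ := hsi
      obtain ⟨h1, h2, h3⟩ := vec_le_vec.mp hle
      exact ⟨i, l, h1, h2, h3⟩
    · rintro ⟨i, l, h1, h2, h3⟩ xi hxi
      have hc' := mem_support_iff.mp hxi
      rw [coeff_monomial] at hc'
      have hxe : vec p q r = xi := by
        by_contra hne; rw [if_neg hne] at hc'; exact hc' rfl
      subst hxe
      exact ⟨vec (a i l) (b i l) (c i), ⟨⟨i, l⟩, rfl⟩, vec_le_vec.mpr ⟨h1, h2, h3⟩⟩
  have memU : ∀ p q r : ℕ, a kk jj ≤ p → b kk jj ≤ q → c kk ≤ r →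
      monomial (vec p q r) (1:K) ∈ I :=
    fun p q r h1 h2 h3 => (memIff p q r).mpr ⟨kk, jj, h1, h2, h3⟩
  have memV : ∀ p q r : ℕ, a kk jj' ≤ p → b kk jj' ≤ q → c kk ≤ r →
      monomial (vec p q r) (1:K) ∈ I :=
    fun p q r h1 h2 h3 => (memIff p q r).mpr ⟨kk, jj', h1, h2, h3⟩
  have hgap : ∀ i : Fin t, c i < c kk → c i ≤ c k1 := by
    intro i hi
    have hik : i < kk := by
      by_contra hcon
      exact absurd (hc.monotone (not_lt.mp hcon)) (not_le.mpr hi)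
    apply hc.monotone
    rw [Fin.le_def]
    rw [Fin.lt_def] at hik
    simp [hkk, hk1d] at hik ⊢
    omega
  have hjumpfact : ∀ l : Fin (ℓ kk), ¬(a kk jj < a kk l ∧ a kk l < a kk jj') := by
    rintro l ⟨h1, h2⟩
    have hl1 : jj < l := (ha kk).lt_iff_lt.mp h1
    have hl2 : l < jj' := (ha kk).lt_iff_lt.mp h2
    rw [Fin.lt_def] at hl1 hl2
    simp [hjjd, hjj'd] at hl1 hl2
    omega
  have notMemE : monomial (vec (a kk jj + 1) B2 (c kk)) (1:K) ∉ I := by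
    intro hmem
    obtain ⟨i, l, h1, h2, h3⟩ := (memIff _ _ _).mp hmem
    by_cases hcc : c i = c kk
    · have hik : i = kk := hc.injective hcc
      subst hik
      have hll := hd kk l
      exact hjumpfact l ⟨by omega, by omega⟩
    · have hcp : c i ≤ c k1 := hgap i (lt_of_le_of_ne h3 hcc)
      have hll := hd i l
      omega
  -- Step 1
  have step1 : ∃ P, a kk jj + 1 ≤ P ∧ P + 1 ≤ a kk jj' ∧
      monomial (vec P (b kk jj) C2) (1:K) ∈ I ∧
      monomial (vec (P+1) B2 C2) (1:K) ∈ I := by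
    have key : ∀ i : ℕ, i ≤ s2 → monomial (vec (a kk jj + 2 + i) B2 (c kk)) (1:K) ∈ I →
        ∃ P, a kk jj + 1 ≤ P ∧ P + 1 ≤ a kk jj' ∧
          monomial (vec P (b kk jj) C2) (1:K) ∈ I ∧
          monomial (vec (P+1) B2 C2) (1:K) ∈ I := by
      intro i
      induction i with
      | zero =>
        intro _ hmem
        have hmem' : monomial (vec (a kk jj + 1 + 1) B2 (C2+1)) (1:K) ∈ I := by
          rw [← hC2]; exact hmem
        have hconn := conn01 hIA hreg hd1 (a kk jj + 1) B2 C2 (by omega)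
          (memU _ _ _ (by omega) (by omega) (by omega)) hmem'
        rcases hconn with h | ⟨hL, hR⟩
        · rw [← hC2] at h
          exact absurd h notMemE
        · refine ⟨a kk jj + 1, le_refl _, by omega, ?_, hR⟩
          rw [hB2]; exact hL
      | succ n ihn =>
        intro hle hmem
        have hmem' : monomial (vec (a kk jj + 2 + n + 1) B2 (C2+1)) (1:K) ∈ I := by
          rw [← hC2]; exact hmem
        have hconn := conn01 hIA hreg hd1 (a kk jj + 2 + n) B2 C2 (by omega)
          (memU _ _ _ (by omega) (by omega) (by omega)) hmem'
        rcases hconn with h | ⟨hL, hR⟩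
        · rw [← hC2] at h
          exact ihn (by omega) h
        · refine ⟨a kk jj + 2 + n, by omega, by omega, ?_, hR⟩
          rw [hB2]; exact hL
    apply key s2 (le_refl _)
    have he : a kk jj + 2 + s2 = a kk jj' := by omega
    rw [he]
    exact memV _ _ _ (le_refl _) (by omega) (le_refl _)
  obtain ⟨P, hPa, hPb, hVmem, hWmem⟩ := step1
  constructor
  · -- Goal A
    set SA : Set ℕ := {x | ∃ (i : Fin t) (l : Fin (ℓ i)),
      b i l = x ∧ a i l ≤ a kk jj' ∧ c i ≤ c k1} with hSA
    have hne : SA.Nonempty := by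
      obtain ⟨i, l, h1, h2, h3⟩ := (memIff _ _ _).mp hWmem
      exact ⟨b i l, i, l, rfl, by omega, hgap i (by omega)⟩
    have hB1le : sInf SA ≤ B2 := by
      obtain ⟨i, l, h1, h2, h3⟩ := (memIff _ _ _).mp hWmem
      have hmemS : b i l ∈ SA := ⟨i, l, rfl, by omega, hgap i (by omega)⟩
      have := Nat.sInf_le hmemS; omega
    obtain ⟨i0, l0, hi0b, hi0a, hi0c⟩ := Nat.sInf_mem hne
    have hd0 := hd i0 l0
    by_cases hcase : a kk jj' + sInf SA + c k1 ≤ d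
    · have hae : a i0 l0 = a kk jj' := by omega
      have hce : c i0 = c k1 := by omega
      have hik : i0 = k1 := hc.injective hce
      subst hik
      exact ⟨l0, hae⟩
    · exfalso
      have hB1big : b kk jj' + (c kk - c k1) + 1 ≤ sInf SA := by omega
      obtain ⟨Q1, hQ1⟩ : ∃ x, sInf SA = x + 1 := ⟨sInf SA - 1, by omega⟩
      obtain ⟨P2, hP2e⟩ : ∃ x, a kk jj' = x + 1 := ⟨a kk jj' - 1, by omega⟩
      have h1m : monomial (vec (P2+1) Q1 (C2+1)) (1:K) ∈ I :=
        memV _ _ _ (by omega) (by omega) (by omega)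
      have h2m : monomial (vec (P2+1) (Q1+1) C2) (1:K) ∈ I :=
        (memIff _ _ _).mpr ⟨i0, l0, by omega, by omega, by omega⟩
      have hconn := conn12 hIA hreg hd1 P2 Q1 C2 (by omega) h1m h2m
      rcases hconn with h | ⟨hL, hR⟩
      · obtain ⟨i, l, h1', h2', h3'⟩ := (memIff _ _ _).mp h
        have hmemS : b i l ∈ SA := ⟨i, l, rfl, by omega, hgap i (by omega)⟩
        have := Nat.sInf_le hmemS; omega
      · obtain ⟨i, l, h1', h2', h3'⟩ := (memIff _ _ _).mp hL
        by_cases hcc : c i = c kk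
        · have hik : i = kk := hc.injective hcc
          subst hik
          have hll := hd kk l
          exact hjumpfact l ⟨by omega, by omega⟩
        · have hcp : c i ≤ c k1 := hgap i (by omega)
          have hmemS : b i l ∈ SA := ⟨i, l, rfl, by omega, hcp⟩
          have := Nat.sInf_le hmemS; omega
  · -- Goal B
    set SB : Set ℕ := {x | ∃ (i : Fin t) (l : Fin (ℓ i)),
      a i l = x ∧ b i l ≤ b kk jj ∧ c i ≤ c k1} with hSB
    have hne : SB.Nonempty := by
      obtain ⟨i, l, h1, h2, h3⟩ := (memIff _ _ _).mp hVmem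
      exact ⟨a i l, i, l, rfl, h2, hgap i (by omega)⟩
    have hA1le : sInf SB ≤ P := by
      obtain ⟨i, l, h1, h2, h3⟩ := (memIff _ _ _).mp hVmem
      have hmemS : a i l ∈ SB := ⟨i, l, rfl, h2, hgap i (by omega)⟩
      have := Nat.sInf_le hmemS; omega
    obtain ⟨i0, l0, hi0a, hi0b, hi0c⟩ := Nat.sInf_mem hne
    have hd0 := hd i0 l0
    by_cases hcase : sInf SB + b kk jj + c k1 ≤ d
    · have hbe : b i0 l0 = b kk jj := by omega
      have hce : c i0 = c k1 := by omega
      have hik : i0 = k1 := hc.injective hce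
      subst hik
      exact ⟨l0, hbe⟩
    · exfalso
      have hA1big : a kk jj + (c kk - c k1) + 1 ≤ sInf SB := by omega
      obtain ⟨P1, hP1e⟩ : ∃ x, sInf SB = x + 1 := ⟨sInf SB - 1, by omega⟩
      have h0m : monomial (vec P1 (B2+1) (C2+1)) (1:K) ∈ I :=
        memU _ _ _ (by omega) (by omega) (by omega)
      have h2m : monomial (vec (P1+1) (B2+1) C2) (1:K) ∈ I :=
        (memIff _ _ _).mpr ⟨i0, l0, by omega, by omega, by omega⟩
      have hconn := conn02 hIA hreg hd1 P1 B2 C2 (by omega) h0m h2m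
      rcases hconn with h | ⟨hL, hR⟩
      · obtain ⟨i, l, h1', h2', h3'⟩ := (memIff _ _ _).mp h
        have hmemS : a i l ∈ SB := ⟨i, l, rfl, by omega, hgap i (by omega)⟩
        have := Nat.sInf_le hmemS; omega
      · obtain ⟨i, l, h1', h2', h3'⟩ := (memIff _ _ _).mp hL
        by_cases hcc : c i = c kk
        · have hik : i = kk := hc.injective hcc
          subst hik
          have hll := hd kk l
          exact hjumpfact l ⟨by omega, by omega⟩
        · have hcp : c i ≤ c k1 := hgap i (by omega)
          have hmemS : a i l ∈ SB := ⟨i, l, rfl, by omega, hcp⟩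
          have := Nat.sInf_le hmemS; omega
end

section
/- Let I ⊆ S = K[x_1, …, x_n] be a monomial ideal with minimal monomial generators having minimum x_k-exponent d_min and maximum x_k-exponent d_max (for a fixed k ∈ {1, …, n}). Then every minimal monomial generator of the integral closure Ī has x_k-exponent between d_min and d_max. -/
open MvPolynomial

open Pointwise

section helpers
variable {K : Type*} [Field K] {n : ℕ}

lemma mem_span_mono {A : Set (Fin n →₀ ℕ)} {c : Fin n →₀ ℕ} :
    (monomial c (1:K)) ∈ Ideal.span ((fun a => monomial a (1:K)) '' A) ↔ ∃ a ∈ A, a ≤ c := by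
  rw [MvPolynomial.mem_ideal_span_monomial_image]
  simp [MvPolynomial.support_monomial]

/-- the set of sums of `m` elements of `A` -/
def sumSet (A : Set (Fin n →₀ ℕ)) (m : ℕ) : Set (Fin n →₀ ℕ) :=
  {b | ∃ f : Fin m → (Fin n →₀ ℕ), (∀ j, f j ∈ A) ∧ ∑ j, f j = b}

lemma span_mono_pow (A : Set (Fin n →₀ ℕ)) (m : ℕ) :
    (Ideal.span ((fun a => monomial a (1:K)) '' A)) ^ m
      = Ideal.span ((fun a => monomial a (1:K)) '' sumSet A m) := by
  induction m with
  | zero =>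
      rw [pow_zero, Ideal.one_eq_top]
      have h0 : sumSet A 0 = {(0 : Fin n →₀ ℕ)} := by
        ext b
        simp [sumSet, eq_comm]
      rw [h0]
      rw [Set.image_singleton]
      rw [eq_comm, Ideal.eq_top_iff_one]
      have : (monomial (0 : Fin n →₀ ℕ) (1:K)) = 1 := by simp
      rw [← this]
      exact Ideal.subset_span rfl
  | succ m ih =>
      rw [pow_succ, ih, Ideal.span_mul_span']
      congr 1
      ext u
      constructor
      · rintro ⟨x, ⟨b, ⟨f, hf, rfl⟩, rfl⟩, y, ⟨a, ha, rfl⟩, rfl⟩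
        refine ⟨(∑ j, f j) + a, ⟨Fin.snoc f a, ?_, ?_⟩, ?_⟩
        · intro j
          refine Fin.lastCases ?_ ?_ j
          · simpa using ha
          · intro i; simpa using hf i
        · rw [Fin.sum_univ_castSucc]
          simp
        · simp [MvPolynomial.monomial_mul]
      · rintro ⟨b, ⟨f, hf, rfl⟩, rfl⟩
        refine ⟨monomial (∑ j : Fin m, f j.castSucc) (1:K),
          ⟨_, ⟨fun j => f j.castSucc, fun j => hf _, rfl⟩, rfl⟩,
          monomial (f (Fin.last m)) (1:K), ⟨_, hf _, rfl⟩, ?_⟩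
        show monomial _ (1:K) * monomial _ (1:K) = monomial _ (1:K)
        rw [MvPolynomial.monomial_mul, one_mul, ← Fin.sum_univ_castSucc]

lemma mono_mem_of_le {I : Ideal (MvPolynomial (Fin n) K)} {g b : Fin n →₀ ℕ}
    (hle : g ≤ b) (hg : (monomial g (1:K)) ∈ I) : (monomial b (1:K)) ∈ I := by
  have : (monomial b (1:K)) = (monomial (b - g) (1:K)) * monomial g (1:K) := by
    rw [MvPolynomial.monomial_mul, one_mul, tsub_add_cancel_of_le hle]
  rw [this]
  exact Ideal.mul_mem_left _ _ hg

lemma exists_min_gen {I : Ideal (MvPolynomial (Fin n) K)} {c : Fin n →₀ ℕ}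
    (hc : (monomial c (1:K)) ∈ I) : ∃ g, IsMinMonGen I g ∧ g ≤ c := by
  suffices H : ∀ d (c : Fin n →₀ ℕ), (c.sum fun _ x => x) = d → (monomial c (1:K)) ∈ I →
      ∃ g, IsMinMonGen I g ∧ g ≤ c from H _ c rfl hc
  intro d
  induction d using Nat.strong_induction_on with
  | _ d ihd =>
  intro c hd hc
  by_cases hmin : ∀ i : Fin n, c i ≠ 0 → (monomial (c - Finsupp.single i 1) (1:K)) ∉ I
  · exact ⟨c, ⟨hc, hmin⟩, le_refl c⟩
  · push_neg at hmin
    obtain ⟨i, hi, hmem⟩ := hmin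
    have hsle : Finsupp.single i 1 ≤ c := by
      rw [Finsupp.single_le_iff]; omega
    have hdeg : ((c - Finsupp.single i 1).sum fun _ x => x) < d := by
      have hcc : (c - Finsupp.single i 1) + Finsupp.single i 1 = c := tsub_add_cancel_of_le hsle
      have := Finsupp.sum_add_index' (f := c - Finsupp.single i 1) (g := Finsupp.single i 1)
        (h := fun (_ : Fin n) (x : ℕ) => x) (fun _ => rfl) (fun _ _ _ => rfl)
      rw [hcc] at this
      rw [← hd, this]
      simp
    obtain ⟨g, hg, hgle⟩ := ihd _ hdeg _ rfl hmem
    exact ⟨g, hg, hgle.trans tsub_le_self⟩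

lemma prod_mono_mem_pow {I : Ideal (MvPolynomial (Fin n) K)} {m : ℕ}
    {b : Fin m → (Fin n →₀ ℕ)} (hb : ∀ j, (monomial (b j) (1:K)) ∈ I) :
    (monomial (∑ j, b j) (1:K)) ∈ I ^ m := by
  induction m with
  | zero => simp [Ideal.one_eq_top]
  | succ m ih =>
      rw [pow_succ, Fin.sum_univ_castSucc]
      have : (monomial (∑ j : Fin m, b j.castSucc + b (Fin.last m)) (1:K))
          = monomial (∑ j : Fin m, b j.castSucc) (1:K) * monomial (b (Fin.last m)) (1:K) := by
        rw [MvPolynomial.monomial_mul, one_mul]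
      rw [this]
      exact Ideal.mul_mem_mul (ih (fun j => hb _)) (hb _)

end helpers

/-- Let `I ⊆ K[x₁,…,xₙ]` be a monomial ideal whose minimal monomial
generators have minimum `x_k`-exponent `dmin` and maximum `x_k`-exponent `dmax`. Then
every minimal monomial generator of the integral closure `Ī` has `x_k`-exponent between
`dmin` and `dmax`. -/
theorem stmt_15 {K : Type*} [Field K] {n : ℕ} (I : Ideal (MvPolynomial (Fin n) K))
    (hmono : IsMonomialIdeal I) (k : Fin n) (dmin dmax : ℕ)
    (hmin : ∃ e : Fin n →₀ ℕ, IsMinMonGen I e ∧ e k = dmin)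
    (hmax : ∃ e : Fin n →₀ ℕ, IsMinMonGen I e ∧ e k = dmax)
    (hbound : ∀ e : Fin n →₀ ℕ, IsMinMonGen I e → dmin ≤ e k ∧ e k ≤ dmax) :
    ∀ e : Fin n →₀ ℕ, IsMinMonGen (intCl I) e → dmin ≤ e k ∧ e k ≤ dmax := by
  obtain ⟨A, hA⟩ := hmono
  intro e he
  obtain ⟨heI, hemin⟩ := he
  set T : Set (Fin n →₀ ℕ) := {a | ∃ m : ℕ, 1 ≤ m ∧ (monomial a (1:K)) ^ m ∈ I ^ m} with hT
  have hIc : intCl I = Ideal.span ((fun a => monomial a (1:K)) '' T) := by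
    rw [intCl]
    congr 1
    ext u
    constructor
    · rintro ⟨⟨a, rfl⟩, m, hm, hmem⟩; exact ⟨a, ⟨m, hm, hmem⟩, rfl⟩
    · rintro ⟨a, ⟨m, hm, hmem⟩, rfl⟩; exact ⟨⟨a, rfl⟩, m, hm, hmem⟩
  -- e itself is "integral": e ∈ T
  have heT : e ∈ T := by
    have h1 := heI
    rw [hIc, mem_span_mono] at h1
    obtain ⟨a, haT, hale⟩ := h1
    rcases eq_or_ne a e with rfl | hne
    · exact haT
    · exfalso
      have : ∃ i, a i < e i := by
        by_contra hno
        push_neg at hno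
        exact hne (le_antisymm hale (Finsupp.le_def.mpr hno))
      obtain ⟨i, hi⟩ := this
      have hi0 : e i ≠ 0 := by omega
      refine hemin i hi0 ?_
      rw [hIc, mem_span_mono]
      refine ⟨a, haT, Finsupp.le_def.mpr fun j => ?_⟩
      rw [Finsupp.tsub_apply, Finsupp.single_apply]
      rcases eq_or_ne i j with rfl | hij
      · simp; omega
      · simp [hij]
        exact Finsupp.le_def.mp hale j
  obtain ⟨m, hm1, hpow⟩ := heT
  rw [MvPolynomial.monomial_pow, one_pow] at hpow
  rw [hA, span_mono_pow, mem_span_mono] at hpow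
  obtain ⟨b, ⟨f, hf, rfl⟩, hble⟩ := hpow
  -- each f j is divisible by a minimal generator
  have hfI : ∀ j, (monomial (f j) (1:K)) ∈ I := fun j => by
    rw [hA]; exact Ideal.subset_span ⟨f j, hf j, rfl⟩
  choose g hg hgle using fun j => exists_min_gen (hfI j)
  have hgb := fun j => hbound (g j) (hg j)
  have hsum : ∀ i, (∑ j, f j) i = ∑ j, f j i := fun i => by
    rw [Finsupp.finset_sum_apply]
  have hble' : ∀ i, ∑ j, f j i ≤ m * e i := fun i => by
    have := Finsupp.le_def.mp hble i
    rwa [hsum, Finsupp.smul_apply, smul_eq_mul] at this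
  constructor
  · -- lower bound
    have h1 : m * dmin ≤ ∑ j : Fin m, f j k := by
      calc m * dmin = ∑ _j : Fin m, dmin := by simp [Finset.sum_const, mul_comm]
        _ ≤ ∑ j : Fin m, f j k := Finset.sum_le_sum fun j _ =>
            le_trans (hgb j).1 (Finsupp.le_def.mp (hgle j) k)
    have := le_trans h1 (hble' k)
    exact Nat.le_of_mul_le_mul_left this (by omega)
  · -- upper bound
    by_contra hgt
    push_neg at hgt
    have hek0 : e k ≠ 0 := by omega
    refine hemin k hek0 ?_
    rw [hIc, mem_span_mono]
    set e' : Fin n →₀ ℕ := e - Finsupp.single k 1 with he'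
    refine ⟨e', ⟨m, hm1, ?_⟩, le_refl e'⟩
    rw [MvPolynomial.monomial_pow, one_pow]
    set b' : Fin m → (Fin n →₀ ℕ) := fun j => f j - Finsupp.single k (f j k - dmax) with hb'
    have hb'I : ∀ j, (monomial (b' j) (1:K)) ∈ I := fun j => by
      refine mono_mem_of_le (Finsupp.le_def.mpr fun i => ?_) (hg j).1
      rw [hb']
      rw [Finsupp.tsub_apply, Finsupp.single_apply]
      have h1 := Finsupp.le_def.mp (hgle j) i
      rcases eq_or_ne k i with rfl | hki
      · simp
        have := (hgb j).2
        omega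
      · simp [hki]
        exact h1
    refine mono_mem_of_le (Finsupp.le_def.mpr fun i => ?_) (prod_mono_mem_pow hb'I)
    rw [Finsupp.finset_sum_apply, Finsupp.smul_apply, smul_eq_mul, he',
      Finsupp.tsub_apply, Finsupp.single_apply]
    rcases eq_or_ne k i with rfl | hki
    · simp only [if_pos rfl]
      have h2 : ∀ j : Fin m, b' j k ≤ dmax := fun j => by
        rw [hb', Finsupp.tsub_apply, Finsupp.single_apply, if_pos rfl]
        omega
      calc ∑ j : Fin m, b' j k ≤ ∑ _j : Fin m, dmax := Finset.sum_le_sum fun j _ => h2 j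
        _ = m * dmax := by simp [mul_comm]
        _ ≤ m * (e k - 1) := Nat.mul_le_mul_left m (by omega)
    · simp only [if_neg hki]
      have h3 : ∀ j : Fin m, b' j i = f j i := fun j => by
        rw [hb', Finsupp.tsub_apply, Finsupp.single_apply, if_neg hki]
        simp
      rw [Finset.sum_congr rfl fun j _ => h3 j, Nat.sub_zero]
      exact hble' i
end
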